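/- arXiv:0904.3045 — 9 statements merged into one kernel-verified Lean document; each statement's English description precedes it below -/
import Mathlib

section
/- A Gorenstein flat module with finite flat dimension is flat. -/
open CategoryTheory DirectSum

universe u

section Defs

variable (R : Type u) [Ring R]

/-- The ℤ-indexed complex `⋯ → P (i+1) → P i → ⋯` is exact, and it is the `n`-periodic
unrolling of an exact sequence `0 → M → P_{n-1} → ⋯ → P_0 → M → 0`; that is, `M` is
(isomorphic to) the syzygy of the complex at every position divisible by `n`. -/
def IsPeriodicExact (n : ℕ) (M : Type u) [AddCommGroup M] [Module R M]
    (P : ℤ → ModuleCat.{u} R) (d : ∀ i : ℤ, P (i + 1) →ₗ[R] P i) : Prop :=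
  (∀ i : ℤ, Function.Exact (d (i + 1)) (d i)) ∧
  ∀ k : ℤ, Nonempty (M ≃ₗ[R] LinearMap.range (d ((n : ℤ) * k)))

/-- The complex stays exact after applying `Hom_R(-, Q)` for every projective `Q`. -/
def IsHomExact (P : ℤ → ModuleCat.{u} R) (d : ∀ i : ℤ, P (i + 1) →ₗ[R] P i) : Prop :=
  ∀ (Q : ModuleCat.{u} R), Module.Projective R Q →
    ∀ i : ℤ, Function.Exact (fun g : P i →ₗ[R] Q => g.comp (d i))
      (fun g : P (i + 1) →ₗ[R] Q => g.comp (d (i + 1)))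

/-- `M` is `n`-strongly Gorenstein projective: there is an exact sequence
`0 → M → P_{n-1} → ⋯ → P_0 → M → 0` with all `P i` projective which stays exact
under `Hom_R(-, Q)` for every projective `Q` (encoded via its periodic unrolling). -/
def IsNSGProjective (n : ℕ) (M : Type u) [AddCommGroup M] [Module R M] : Prop :=
  ∃ (P : ℤ → ModuleCat.{u} R) (d : ∀ i : ℤ, P (i + 1) →ₗ[R] P i),
    (∀ i, Module.Projective R (P i)) ∧ IsPeriodicExact R n M P d ∧ IsHomExact R P d

/-- `M` is Gorenstein projective: it is a syzygy of a totally acyclic complex of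
projectives. -/
def IsGProjective (M : Type u) [AddCommGroup M] [Module R M] : Prop :=
  ∃ (P : ℤ → ModuleCat.{u} R) (d : ∀ i : ℤ, P (i + 1) →ₗ[R] P i),
    (∀ i, Module.Projective R (P i)) ∧ (∀ i : ℤ, Function.Exact (d (i + 1)) (d i)) ∧
    IsHomExact R P d ∧ Nonempty (M ≃ₗ[R] LinearMap.range (d 0))

/-- The projective dimension of `M` is at most `m`. -/
def projDimLE : ℕ → ModuleCat.{u} R → Prop
  | 0, M => Module.Projective R M
  | m + 1, M => ∃ (F : ModuleCat.{u} R) (f : F →ₗ[R] M), Module.Projective R F ∧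
      Function.Surjective f ∧ projDimLE m (ModuleCat.of R (LinearMap.ker f))

end Defs

section FlatDefs

variable (R : Type u) [CommRing R]

/-- The complex stays exact after applying `I ⊗_R -` for every injective module `I`. -/
def IsTensorExact (P : ℤ → ModuleCat.{u} R) (d : ∀ i : ℤ, P (i + 1) →ₗ[R] P i) : Prop :=
  ∀ (I : ModuleCat.{u} R), Module.Injective R I →
    ∀ i : ℤ, Function.Exact (LinearMap.lTensor I (d (i + 1))) (LinearMap.lTensor I (d i))

/-- `M` is `n`-strongly Gorenstein flat: there is an exact sequence
`0 → M → F_{n-1} → ⋯ → F_0 → M → 0` with all `F i` flat which stays exact under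
`I ⊗_R -` for every injective `I` (encoded via its periodic unrolling). -/
def IsNSGFlat (n : ℕ) (M : Type u) [AddCommGroup M] [Module R M] : Prop :=
  ∃ (P : ℤ → ModuleCat.{u} R) (d : ∀ i : ℤ, P (i + 1) →ₗ[R] P i),
    (∀ i, Module.Flat R (P i)) ∧ IsPeriodicExact R n M P d ∧ IsTensorExact R P d

/-- `M` is Gorenstein flat: it is a syzygy of an exact complex of flat modules which
stays exact under `I ⊗_R -` for every injective `I`. -/
def IsGFlat (M : Type u) [AddCommGroup M] [Module R M] : Prop :=
  ∃ (P : ℤ → ModuleCat.{u} R) (d : ∀ i : ℤ, P (i + 1) →ₗ[R] P i),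
    (∀ i, Module.Flat R (P i)) ∧ (∀ i : ℤ, Function.Exact (d (i + 1)) (d i)) ∧
    IsTensorExact R P d ∧ Nonempty (M ≃ₗ[R] LinearMap.range (d 0))

/-- The flat dimension of `M` is at most `m`. -/
def flatDimLE : ℕ → ModuleCat.{u} R → Prop
  | 0, M => Module.Flat R M
  | m + 1, M => ∃ (F : ModuleCat.{u} R) (f : F →ₗ[R] M), Module.Flat R F ∧
      Function.Surjective f ∧ flatDimLE m (ModuleCat.of R (LinearMap.ker f))

/-- The complex stays exact after applying `Hom_R(X, -)` for every injective `X`. -/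
def IsCohomExact (E : ℤ → ModuleCat.{u} R) (d : ∀ i : ℤ, E (i + 1) →ₗ[R] E i) : Prop :=
  ∀ (X : ModuleCat.{u} R), Module.Injective R X →
    ∀ i : ℤ, Function.Exact (fun g : X →ₗ[R] E (i + 1 + 1) => (d (i + 1)).comp g)
      (fun g : X →ₗ[R] E (i + 1) => (d i).comp g)

/-- `M` is `n`-strongly Gorenstein injective: there is an exact sequence
`0 → M → E^{n-1} → ⋯ → E^0 → M → 0` with all `E i` injective which stays exact under
`Hom_R(X, -)` for every injective `X` (encoded via its periodic unrolling). -/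
def IsNSGInjective (n : ℕ) (M : Type u) [AddCommGroup M] [Module R M] : Prop :=
  ∃ (E : ℤ → ModuleCat.{u} R) (d : ∀ i : ℤ, E (i + 1) →ₗ[R] E i),
    (∀ i, Module.Injective R (E i)) ∧ IsPeriodicExact R n M E d ∧ IsCohomExact R E d

end FlatDefs

/-!
`M` is flat iff its character module `M⁺ = Hom_ℤ(M, ℚ/ℤ)` is injective. Dualising the complete
flat resolution `P` gives an exact complex `P⁺` of injectives, and by tensor–hom adjunction the
exactness of `I ⊗ P` says that `Hom(I, P⁺)` is exact for every injective `I`. The character modules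
of a finite flat resolution of `M` let dimension shifting carry this over to `Hom(M⁺, P⁺)`. As `M`
is a syzygy of `P`, `M⁺` is a quotient of `P₀⁺`, and exactness of `Hom(M⁺, P⁺)` splits the quotient
map, so `M⁺` is a direct summand of the injective module `P₀⁺`.
-/

open LinearMap

universe v

theorem Function.Exact.exists_comp_eq_of_comp_eq_zero {R : Type*} [Ring R]
    {A B C D : Type*} [AddCommGroup A] [AddCommGroup B] [AddCommGroup C] [AddCommGroup D]
    [Module R A] [Module R B] [Module R C] [Module R D] {f : A →ₗ[R] B} {g : B →ₗ[R] C}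
    (hfg : Function.Exact f g) (hg : Function.Surjective g) (u : B →ₗ[R] D)
    (hu : u ∘ₗ f = 0) : ∃ v : C →ₗ[R] D, v ∘ₗ g = u :=
  ⟨(range f).liftQ u (range_le_ker_iff.mpr hu) ∘ₗ (hfg.linearEquivOfSurjective hg).symm,
    by ext x; simp⟩

theorem Module.Injective.of_retract {R : Type*} [Ring R] {Q N : Type v} [AddCommGroup Q]
    [AddCommGroup N] [Module R Q] [Module R N] [Module.Injective R Q]
    (s : N →ₗ[R] Q) (r : Q →ₗ[R] N) (hrs : r ∘ₗ s = LinearMap.id) : Module.Injective R N where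
  out _ _ _ _ _ _ j hj t := by
    obtain ⟨h, hh⟩ := Module.Injective.out j hj (s ∘ₗ t)
    exact ⟨r ∘ₗ h, fun x => by simp [hh x, ← LinearMap.comp_apply r s, hrs]⟩

namespace CharacterModule

variable {R : Type*} [CommRing R] {A B C : Type*} [AddCommGroup A] [AddCommGroup B]
  [AddCommGroup C] [Module R A] [Module R B] [Module R C]

theorem exact_dual {f : A →ₗ[R] B} {g : B →ₗ[R] C} (hfg : Function.Exact f g) :
    Function.Exact (dual g) (dual f) := by
  intro φ
  constructor
  · intro hφ
    -- characters are only additive, so `φ` is factored through `g` over `ℤ`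
    have hexact : Function.Exact (f.restrictScalars ℤ) (g.rangeRestrict.restrictScalars ℤ) :=
      fun b => by simpa [Subtype.ext_iff] using hfg b
    obtain ⟨v, hv⟩ := hexact.exists_comp_eq_of_comp_eq_zero g.surjective_rangeRestrict
      φ.toIntLinearMap (by ext a; exact DFunLike.congr_fun hφ a)
    obtain ⟨ψ, hψ⟩ := dual_surjective_of_injective (R := R) (range g).subtype
      (range g).injective_subtype v.toAddMonoidHom
    refine ⟨ψ, ?_⟩
    ext b
    calc ψ (g b) = v (g.rangeRestrict b) := DFunLike.congr_fun hψ (g.rangeRestrict b)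
      _ = φ b := DFunLike.congr_fun hv b
  · rintro ⟨ψ, rfl⟩
    rw [← LinearMap.comp_apply, ← dual_comp, hfg.linearMap_comp_eq_zero, dual_zero,
      LinearMap.zero_apply]

theorem homEquiv_dual_comp {X : Type*} [AddCommGroup X] [Module R X] (g : B →ₗ[R] C)
    (ψ : X →ₗ[R] CharacterModule C) :
    homEquiv (dual g ∘ₗ ψ) = dual (g.lTensor X) (homEquiv ψ) := by
  ext z
  induction z using TensorProduct.induction_on with
  | zero => simp only [map_zero]
  | tmul x b => rfl
  | add z z' hz hz' => rw [map_add, map_add, hz, hz']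

theorem exists_dual_comp_eq_of_exact_lTensor {X : Type*} [AddCommGroup X] [Module R X]
    {f : A →ₗ[R] B} {g : B →ₗ[R] C} (hfg : Function.Exact (f.lTensor X) (g.lTensor X))
    (φ : X →ₗ[R] CharacterModule B) (hφ : dual f ∘ₗ φ = 0) :
    ∃ ψ : X →ₗ[R] CharacterModule C, dual g ∘ₗ ψ = φ := by
  obtain ⟨c, hc⟩ := (exact_dual hfg (homEquiv φ)).mp
    (by rw [← homEquiv_dual_comp, hφ, map_zero])
  refine ⟨homEquiv.symm c, homEquiv.injective ?_⟩
  rw [homEquiv_dual_comp, LinearEquiv.apply_symm_apply, hc]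

end CharacterModule

section HomExact

variable {R : Type*} [Ring R] {E : ℤ → Type v} [∀ i, AddCommGroup (E i)] [∀ i, Module R (E i)]

def IsHomExactFrom (N : Type*) [AddCommGroup N] [Module R N] (δ : ∀ i, E i →ₗ[R] E (i + 1)) :
    Prop :=
  ∀ i : ℤ, Function.Exact (fun h : N →ₗ[R] E i => δ i ∘ₗ h)
    (fun g : N →ₗ[R] E (i + 1) => δ (i + 1) ∘ₗ g)

theorem IsHomExactFrom.of_shortExact [Small.{v} R] {δ : ∀ i, E i →ₗ[R] E (i + 1)}
    (hE : ∀ i, Module.Injective R (E i)) (hδ : ∀ i, δ (i + 1) ∘ₗ δ i = 0)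
    {A B C : Type*} [AddCommGroup A] [AddCommGroup B] [AddCommGroup C]
    [Module R A] [Module R B] [Module R C] {e : A →ₗ[R] B} {r : B →ₗ[R] C}
    (he : Function.Injective e) (hr : Function.Surjective r) (her : Function.Exact e r)
    (hB : IsHomExactFrom B δ) (hC : IsHomExactFrom C δ) : IsHomExactFrom A δ := by
  intro i g
  refine ⟨fun hg => ?_, ?_⟩
  · obtain ⟨g₁, hg₁⟩ := Module.Injective.extension_property R _ _ _ e he g
    obtain ⟨v, hv⟩ := her.exists_comp_eq_of_comp_eq_zero hr (δ (i + 1) ∘ₗ g₁)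
      (by rw [comp_assoc, hg₁]; exact hg)
    obtain ⟨w, hw : δ (i + 1) ∘ₗ w = v⟩ := (hC (i + 1) v).mp <| (cancel_right hr).mp <| by
      rw [comp_assoc, hv, ← comp_assoc, hδ, zero_comp, zero_comp]
    obtain ⟨h, hh : δ i ∘ₗ h = g₁ - w ∘ₗ r⟩ := (hB i (g₁ - w ∘ₗ r)).mp <| by
      change δ (i + 1) ∘ₗ (g₁ - w ∘ₗ r) = 0
      rw [comp_sub, ← comp_assoc, hw, hv, sub_self]
    refine ⟨h ∘ₗ e, ?_⟩
    change δ i ∘ₗ h ∘ₗ e = g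
    rw [← comp_assoc, hh, sub_comp, comp_assoc, her.linearMap_comp_eq_zero, comp_zero, sub_zero,
      hg₁]
  · rintro ⟨h, rfl⟩
    change δ (i + 1) ∘ₗ δ i ∘ₗ h = 0
    rw [← comp_assoc, hδ, zero_comp]

end HomExact

section CharacterComplex

open CharacterModule

variable {R : Type u} [CommRing R] {P : ℤ → ModuleCat.{u} R} {d : ∀ i : ℤ, P (i + 1) →ₗ[R] P i}

variable (d) in
def characterDual (i : ℤ) : CharacterModule (P i) →ₗ[R] CharacterModule (P (i + 1)) :=
  dual (d i)

theorem characterDual_comp_characterDual (hex : ∀ i, Function.Exact (d (i + 1)) (d i)) (i : ℤ) :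
    characterDual d (i + 1) ∘ₗ characterDual d i = 0 := by
  rw [characterDual, characterDual, ← dual_comp, (hex i).linearMap_comp_eq_zero, dual_zero]

theorem isHomExactFrom_of_isTensorExact (hex : ∀ i, Function.Exact (d (i + 1)) (d i))
    (htens : IsTensorExact R P d) (X : Type u) [AddCommGroup X] [Module R X]
    [Module.Injective R X] : IsHomExactFrom X (characterDual d) := by
  intro i g
  refine ⟨exists_dual_comp_eq_of_exact_lTensor (htens (ModuleCat.of R X) ‹_› i) g, ?_⟩
  rintro ⟨h, rfl⟩
  change characterDual d (i + 1) ∘ₗ characterDual d i ∘ₗ h = 0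
  rw [← comp_assoc, characterDual_comp_characterDual hex, zero_comp]

theorem isHomExactFrom_characterModule_of_flatDimLE (hflat : ∀ i, Module.Flat R (P i))
    (hex : ∀ i, Function.Exact (d (i + 1)) (d i)) (htens : IsTensorExact R P d) :
    ∀ {n : ℕ} {N : ModuleCat.{u} R}, flatDimLE R n N →
      IsHomExactFrom (CharacterModule N) (characterDual d)
  | 0, _, hN =>
    have := Module.Flat.iff_characterModule_injective.mp hN
    isHomExactFrom_of_isTensorExact hex htens _
  | _ + 1, _, ⟨_, f, hF, hf, hK⟩ =>
    have := Module.Flat.iff_characterModule_injective.mp hF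
    IsHomExactFrom.of_shortExact
      (fun i => Module.Flat.iff_characterModule_injective.mp (hflat i))
      (characterDual_comp_characterDual hex) (dual_injective_of_surjective f hf)
      (dual_surjective_of_injective _ (ker f).injective_subtype)
      (exact_dual (exact_subtype_ker_map f))
      (isHomExactFrom_of_isTensorExact hex htens _)
      (isHomExactFrom_characterModule_of_flatDimLE hflat hex htens hK)

theorem injective_characterModule_of_isHomExactFrom
    [Module.Injective R (CharacterModule (P 0))] (hex : ∀ i, Function.Exact (d (i + 1)) (d i))
    {M : Type u} [AddCommGroup M] [Module R M] (eM : M ≃ₗ[R] range (d 0))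
    (hM : IsHomExactFrom (CharacterModule M) (characterDual d)) :
    Module.Injective R (CharacterModule M) := by
  set ι : M →ₗ[R] P 0 := (range (d 0)).subtype ∘ₗ eM.toLinearMap
  set ρ : P (0 + 1) →ₗ[R] M := eM.symm.toLinearMap ∘ₗ (d 0).rangeRestrict
  have hρ : Function.Surjective ρ := eM.symm.surjective.comp (d 0).surjective_rangeRestrict
  have hιρ : ι ∘ₗ ρ = d 0 := by ext x; simp [ι, ρ]
  have hρd : ρ ∘ₗ d (0 + 1) = 0 := by
    ext x; simpa [ρ, Subtype.ext_iff] using (hex 0).apply_apply_eq_zero x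
  obtain ⟨h, hh : characterDual d 0 ∘ₗ h = dual ρ⟩ := (hM 0 (dual ρ)).mp <| by
    change dual (d (0 + 1)) ∘ₗ dual ρ = 0
    rw [← dual_comp, hρd, dual_zero]
  refine .of_retract h (dual ι) <| (cancel_left (dual_injective_of_surjective ρ hρ)).mp ?_
  rw [← comp_assoc, ← dual_comp, hιρ, comp_id]
  exact hh

end CharacterComplex

/-- A Gorenstein flat module with finite flat dimension is flat. -/
theorem gFlat_of_finite_flat_dim_is_flat (R : Type u) [CommRing R]
    (M : Type u) [AddCommGroup M] [Module R M]
    (hG : IsGFlat R M) (hfd : ∃ m : ℕ, flatDimLE R m (ModuleCat.of R M)) :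
    Module.Flat R M := by
  obtain ⟨P, d, hflat, hex, htens, ⟨eM⟩⟩ := hG
  obtain ⟨m, hm⟩ := hfd
  have := Module.Flat.iff_characterModule_injective.mp (hflat 0)
  rw [Module.Flat.iff_characterModule_injective]
  exact injective_characterModule_of_isHomExactFrom hex eM
    (isHomExactFrom_characterModule_of_flatDimLE hflat hex htens hm)
end

section
/- If n divides m, then every n-strongly Gorenstein projective module is m-strongly Gorenstein projective. -/
open CategoryTheory DirectSum

universe u

theorem IsPeriodicExact.of_dvd {R : Type u} [Ring R] {m n : ℕ} {M : Type u} [AddCommGroup M]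
    [Module R M] {P : ℤ → ModuleCat.{u} R} {d : ∀ i : ℤ, P (i + 1) →ₗ[R] P i} (hdvd : n ∣ m)
    (h : IsPeriodicExact R n M P d) : IsPeriodicExact R m M P d := by
  obtain ⟨c, rfl⟩ := hdvd
  refine ⟨h.1, fun k => ?_⟩
  have hindex : ((n * c : ℕ) : ℤ) * k = n * (c * k) := by push_cast; ring
  rw [hindex]
  exact h.2 (c * k)

theorem nSGProjective_of_dvd_general (R : Type u) [Ring R] (m n : ℕ)
    (hdvd : n ∣ m) (M : Type u) [AddCommGroup M] [Module R M]
    (hM : IsNSGProjective R n M) : IsNSGProjective R m M := by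
  obtain ⟨P, d, hproj, hperiodic, hhom⟩ := hM
  exact ⟨P, d, hproj, hperiodic.of_dvd hdvd, hhom⟩

/-- If `n ∣ m`, then every `n`-strongly Gorenstein projective module is
`m`-strongly Gorenstein projective. -/
theorem nSGProjective_of_dvd (R : Type u) [Ring R] (m n : ℕ) (hn : 0 < n) (hm : 0 < m)
    (hdvd : n ∣ m) (M : Type u) [AddCommGroup M] [Module R M]
    (hM : IsNSGProjective R n M) : IsNSGProjective R m M :=
  nSGProjective_of_dvd_general R m n hdvd M hM
end

section
/- For any positive integers m and n, a module is both m-strongly Gorenstein projective and n-strongly Gorenstein projective if and only if it is d-strongly Gorenstein projective, where d = gcd(m, n). -/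
open CategoryTheory DirectSum

universe u

/-!
Splicing, an `n`-strongly Gorenstein projective module `M` is the same as an `n`-periodic chain
of short exact sequences `Ω^{i+1} ↪ P_i ↠ Ω^i` that stay exact under `Hom(-, Proj)`, with
`Ω^{nk} ≅ M`. A chain of period `n` is also one of every multiple of `n`, so by the Euclidean
algorithm it suffices to produce a chain of period `g > 0` from chains of periods `K + g` and `K`.
Schanuel's lemma, applied along both chains, makes `Ω^K` stably equivalent to `Ω^0 ≅ M`, and then
`M ≅ Ω^{K+g}` stably equivalent to `Ω^g` in the first chain: `M ⊕ U ≅ Ω^g ⊕ V` with `U`, `V`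
projective. Adding `V` to the sequence `Ω^g ↪ P_{g-1} ↠ Ω^{g-1}` and splitting `U` off its middle
term (Hom-exactness provides the retraction) gives a sequence `M ↪ E ↠ Ω^{g-1}` that closes the
first `g` steps into a cycle.
-/

variable {R : Type u} [Ring R]

section SES

variable {A P B : Type u} [AddCommGroup A] [Module R A] [AddCommGroup P] [Module R P]
  [AddCommGroup B] [Module R B]

structure IsProjSES (ι : A →ₗ[R] P) (π : P →ₗ[R] B) : Prop where
  projective : Module.Projective R P
  injective : Function.Injective ι
  surjective : Function.Surjective π
  exact : Function.Exact ι π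

/-- `extend` says that `Hom_R(-, Q)` keeps the sequence exact for every projective `Q`. -/
structure IsHomExactSES (ι : A →ₗ[R] P) (π : P →ₗ[R] B) : Prop extends IsProjSES ι π where
  extend : ∀ (Q : Type u) [AddCommGroup Q] [Module R Q] [Module.Projective R Q]
    (f : A →ₗ[R] Q), ∃ h : P →ₗ[R] Q, h ∘ₗ ι = f

variable {ι : A →ₗ[R] P} {π : P →ₗ[R] B}

theorem IsProjSES.postcomp_equiv {B' : Type u} [AddCommGroup B'] [Module R B']
    (h : IsProjSES ι π) (e : B ≃ₗ[R] B') : IsProjSES ι (e.toLinearMap ∘ₗ π) where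
  projective := h.projective
  injective := h.injective
  surjective := e.surjective.comp h.surjective
  exact := LinearEquiv.postcomp_exact_iff_exact.mpr h.exact

theorem IsProjSES.inl_comp_prodMap_id (U : Type u) [AddCommGroup U] [Module R U]
    [Module.Projective R U] (h : IsProjSES ι π) :
    IsProjSES (LinearMap.inl R P U ∘ₗ ι) (π.prodMap (LinearMap.id : U →ₗ[R] U)) where
  projective := have := h.projective; inferInstance
  injective := LinearMap.inl_injective.comp h.injective
  surjective := h.surjective.prodMap Function.surjective_id
  exact := by
    rintro ⟨p, u⟩
    simp [Prod.ext_iff, h.exact p, @eq_comm _ (0 : U)]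

theorem IsHomExactSES.precomp_equiv {A' : Type u} [AddCommGroup A'] [Module R A']
    (h : IsHomExactSES ι π) (e : A' ≃ₗ[R] A) : IsHomExactSES (ι ∘ₗ e.toLinearMap) π where
  toIsProjSES := ⟨h.projective, h.injective.comp e.injective, h.surjective,
    LinearEquiv.precomp_exact_iff_exact.mpr h.exact⟩
  extend Q _ _ _ f := by
    obtain ⟨g, hg⟩ := h.extend Q (f ∘ₗ e.symm.toLinearMap)
    exact ⟨g, by rw [← LinearMap.comp_assoc, hg]; ext; simp⟩

theorem IsHomExactSES.prodMap_id (W : Type u) [AddCommGroup W] [Module R W]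
    [Module.Projective R W] (h : IsHomExactSES ι π) :
    IsHomExactSES (ι.prodMap (LinearMap.id : W →ₗ[R] W)) (π ∘ₗ LinearMap.fst R P W) where
  projective := have := h.projective; inferInstance
  injective := h.injective.prodMap Function.injective_id
  surjective := h.surjective.comp Prod.fst_surjective
  exact := by
    rintro ⟨p, w⟩
    simp [Prod.ext_iff, h.exact p]
  extend Q _ _ _ f := by
    obtain ⟨g, hg⟩ := h.extend Q (f ∘ₗ LinearMap.inl R A W)
    refine ⟨g.coprod (f ∘ₗ LinearMap.inr R A W), ?_⟩
    ext <;> simp [← hg, Prod.mk_zero_zero]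

/-- Extending the projection `A × W → W` over `E` gives a retraction `r : E → W`, and `ker r` is
the new middle term. -/
theorem IsHomExactSES.absorb {W E C : Type u} [AddCommGroup W] [Module R W]
    [Module.Projective R W] [AddCommGroup E] [Module R E] [AddCommGroup C] [Module R C]
    {ι : A × W →ₗ[R] E} {π : E →ₗ[R] C} (h : IsHomExactSES ι π) :
    ∃ (E' : Submodule R E) (ι' : A →ₗ[R] E') (π' : E' →ₗ[R] C), IsHomExactSES ι' π' := by
  obtain ⟨r, hr⟩ := h.extend W (LinearMap.snd R A W)
  have hrι : ∀ x, r (ι x) = x.2 := LinearMap.congr_fun hr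
  have hπι : ∀ x, π (ι x) = 0 := fun x => (h.exact _).mpr ⟨x, rfl⟩
  let s : E →ₗ[R] LinearMap.ker r :=
    LinearMap.codRestrict _ (LinearMap.id - ι ∘ₗ LinearMap.inr R A W ∘ₗ r) fun e => by
      simp [hrι]
  have hs : ∀ e, (s e : E) = e - ι (0, r e) := fun e => rfl
  refine ⟨LinearMap.ker r, LinearMap.codRestrict _ (ι ∘ₗ LinearMap.inl R A W) fun a => by
    simp [hrι], π ∘ₗ Submodule.subtype _, ⟨⟨?_, ?_, ?_, ?_⟩, ?_⟩⟩
  · have := h.projective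
    refine Module.Projective.of_split (Submodule.subtype _) s (LinearMap.ext fun x => ?_)
    ext
    simp [hs, LinearMap.mem_ker.mp x.2, Prod.mk_zero_zero]
  · intro a a' haa'
    simpa using h.injective (congrArg Subtype.val haa')
  · intro c
    obtain ⟨e, rfl⟩ := h.surjective c
    exact ⟨s e, by simp [hs, hπι]⟩
  · rintro ⟨x, hx⟩
    constructor
    · intro hπx
      obtain ⟨⟨a, w⟩, rfl⟩ := (h.exact x).mp hπx
      obtain rfl : w = 0 := (hrι (a, w)).symm.trans hx
      exact ⟨a, rfl⟩
    · rintro ⟨a, ha⟩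
      rw [← ha]
      exact hπι _
  · intro Q _ _ _ f
    obtain ⟨g, hg⟩ := h.extend Q (f ∘ₗ LinearMap.fst R A W)
    exact ⟨g ∘ₗ Submodule.subtype _, LinearMap.ext fun a => LinearMap.congr_fun hg (a, 0)⟩

end SES

theorem Function.Exact.exists_comp_eq {M N P Q : Type u} [AddCommGroup M] [Module R M]
    [AddCommGroup N] [Module R N] [AddCommGroup P] [Module R P] [AddCommGroup Q] [Module R Q]
    {f : M →ₗ[R] N} {g : N →ₗ[R] P} (h : Function.Exact f g) (hg : Function.Surjective g)
    (G : N →ₗ[R] Q) (hG : G ∘ₗ f = 0) : ∃ G' : P →ₗ[R] Q, G' ∘ₗ g = G := by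
  refine ⟨(LinearMap.range f).liftQ G ?_ ∘ₗ (h.linearEquivOfSurjective hg).symm.toLinearMap, ?_⟩
  · rintro _ ⟨x, rfl⟩
    exact LinearMap.congr_fun hG x
  · ext
    simp

section Splice

variable {S₀ S₁ S₂ M₀ M₁ M₂ : Type u} [AddCommGroup S₀] [Module R S₀] [AddCommGroup S₁]
  [Module R S₁] [AddCommGroup S₂] [Module R S₂] [AddCommGroup M₀] [Module R M₀]
  [AddCommGroup M₁] [Module R M₁] [AddCommGroup M₂] [Module R M₂]
  {ι₀ : S₁ →ₗ[R] M₀} {π₀ : M₀ →ₗ[R] S₀} {ι₁ : S₂ →ₗ[R] M₁} {π₁ : M₁ →ₗ[R] S₁}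
  {π₂ : M₂ →ₗ[R] S₂}

theorem exact_splice (h₀ : Function.Injective ι₀) (h₁ : Function.Exact ι₁ π₁)
    (h₂ : Function.Surjective π₂) : Function.Exact (ι₁ ∘ₗ π₂) (ι₀ ∘ₗ π₁) :=
  h₀.comp_exact_iff_exact.mpr (h₂.comp_exact_iff_exact.mpr h₁)

theorem exact_precomp_splice (h₀ : IsHomExactSES ι₀ π₀) (h₁ : IsProjSES ι₁ π₁)
    (h₂ : Function.Surjective π₂) (Q : Type u) [AddCommGroup Q] [Module R Q]
    [Module.Projective R Q] :
    Function.Exact (fun g : M₀ →ₗ[R] Q => g ∘ₗ ι₀ ∘ₗ π₁)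
      (fun g : M₁ →ₗ[R] Q => g ∘ₗ ι₁ ∘ₗ π₂) := by
  intro G
  constructor
  · intro hG
    have hGι : G ∘ₗ ι₁ = 0 := (LinearMap.cancel_right h₂).mp hG
    obtain ⟨G', rfl⟩ := h₁.exact.exists_comp_eq h₁.surjective G hGι
    obtain ⟨g, rfl⟩ := h₀.extend Q G'
    exact ⟨g, rfl⟩
  · rintro ⟨g, rfl⟩
    change (g ∘ₗ ι₀) ∘ₗ (π₁ ∘ₗ ι₁) ∘ₗ π₂ = 0
    rw [h₁.exact.linearMap_comp_eq_zero, LinearMap.zero_comp, LinearMap.comp_zero]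

end Splice

section Stable

variable (R) in
def StablyEquiv (A B : Type u) [AddCommGroup A] [Module R A] [AddCommGroup B] [Module R B] :
    Prop :=
  ∃ U V : ModuleCat.{u} R, Module.Projective R U ∧ Module.Projective R V ∧
    Nonempty ((A × U) ≃ₗ[R] (B × V))

variable {A B C : Type u} [AddCommGroup A] [Module R A] [AddCommGroup B] [Module R B]
  [AddCommGroup C] [Module R C]

theorem StablyEquiv.of_equiv (e : A ≃ₗ[R] B) : StablyEquiv R A B :=
  ⟨.of R PUnit, .of R PUnit, inferInstance, inferInstance,
    ⟨LinearEquiv.prodUnique ≪≫ₗ e ≪≫ₗ LinearEquiv.prodUnique.symm⟩⟩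

theorem StablyEquiv.trans (h₁ : StablyEquiv R A B) (h₂ : StablyEquiv R B C) :
    StablyEquiv R A C := by
  obtain ⟨U, V, hU, hV, ⟨e₁⟩⟩ := h₁
  obtain ⟨U', V', hU', hV', ⟨e₂⟩⟩ := h₂
  refine ⟨.of R (U × U'), .of R (V' × V), ?_, ?_, ⟨?_⟩⟩
  · exact inferInstanceAs (Module.Projective R (U × U'))
  · exact inferInstanceAs (Module.Projective R (V' × V))
  · exact (LinearEquiv.prodAssoc R A U U').symm ≪≫ₗ e₁.prodCongr (.refl R U') ≪≫ₗ
      LinearEquiv.prodAssoc R B V U' ≪≫ₗ (LinearEquiv.refl R B).prodCongr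
      (LinearEquiv.prodComm R V U') ≪≫ₗ (LinearEquiv.prodAssoc R B U' V).symm ≪≫ₗ
      e₂.prodCongr (.refl R V) ≪≫ₗ LinearEquiv.prodAssoc R C V' V

variable {A₁ A₂ P₁ P₂ : Type u} [AddCommGroup A₁] [Module R A₁] [AddCommGroup A₂] [Module R A₂]
  [AddCommGroup P₁] [Module R P₁] [AddCommGroup P₂] [Module R P₂]

theorem nonempty_prod_equiv_eqLocus [Module.Projective R P₂] {ι₁ : A₁ →ₗ[R] P₁}
    {π₁ : P₁ →ₗ[R] C} (π₂ : P₂ →ₗ[R] C) (hι₁ : Function.Injective ι₁)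
    (hπ₁ : Function.Surjective π₁) (hexact : Function.Exact ι₁ π₁) :
    Nonempty ((A₁ × P₂) ≃ₗ[R]
      LinearMap.eqLocus (π₁ ∘ₗ LinearMap.fst R P₁ P₂) (π₂ ∘ₗ LinearMap.snd R P₁ P₂)) := by
  obtain ⟨β, hβ⟩ := Module.projective_lifting_property π₁ π₂ hπ₁
  let X := LinearMap.eqLocus (π₁ ∘ₗ LinearMap.fst R P₁ P₂) (π₂ ∘ₗ LinearMap.snd R P₁ P₂)
  let f : A₁ →ₗ[R] X := LinearMap.codRestrict X (LinearMap.inl R P₁ P₂ ∘ₗ ι₁) fun a => by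
    simp [X, hexact.apply_apply_eq_zero]
  let g : X →ₗ[R] P₂ := LinearMap.snd R P₁ P₂ ∘ₗ X.subtype
  let l : P₂ →ₗ[R] X := LinearMap.codRestrict X (β.prod LinearMap.id) fun q => by
    simpa [X] using LinearMap.congr_fun hβ q
  have hf_apply : ∀ a, (f a : P₁ × P₂) = (ι₁ a, 0) := fun a => rfl
  have hfg : Function.Exact f g := by
    rintro ⟨⟨p, q⟩, hpq⟩
    simp only [g, LinearMap.coe_comp, LinearMap.coe_snd, Submodule.coe_subtype,
      Function.comp_apply, Set.mem_range, Subtype.ext_iff, hf_apply, Prod.ext_iff,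
      eq_comm (a := (0 : P₂)), exists_and_right, iff_and_self]
    rintro rfl
    exact (hexact p).mp (by simpa [X] using hpq)
  have hf : Function.Injective f := fun a a' haa' =>
    hι₁ (congrArg (fun x : X => (x : P₁ × P₂).1) haa')
  exact ⟨((hfg.splitSurjectiveEquiv hf ⟨l, LinearMap.ext fun q => rfl⟩).1).symm⟩

theorem schanuel {ι₁ : A₁ →ₗ[R] P₁} {π₁ : P₁ →ₗ[R] C} {ι₂ : A₂ →ₗ[R] P₂} {π₂ : P₂ →ₗ[R] C}
    (h₁ : IsProjSES ι₁ π₁) (h₂ : IsProjSES ι₂ π₂) : Nonempty ((A₁ × P₂) ≃ₗ[R] (A₂ × P₁)) := by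
  have := h₁.projective
  have := h₂.projective
  obtain ⟨e₁⟩ := nonempty_prod_equiv_eqLocus π₂ h₁.injective h₁.surjective h₁.exact
  obtain ⟨e₂⟩ := nonempty_prod_equiv_eqLocus π₁ h₂.injective h₂.surjective h₂.exact
  refine ⟨e₁ ≪≫ₗ (LinearEquiv.prodComm R P₁ P₂).ofSubmodules _ _ ?_ ≪≫ₗ e₂.symm⟩
  ext ⟨q, p⟩
  simp [eq_comm]

theorem StablyEquiv.of_isProjSES {C₁ C₂ : Type u} [AddCommGroup C₁] [Module R C₁]
    [AddCommGroup C₂] [Module R C₂] {ι₁ : A₁ →ₗ[R] P₁} {π₁ : P₁ →ₗ[R] C₁} {ι₂ : A₂ →ₗ[R] P₂}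
    {π₂ : P₂ →ₗ[R] C₂} (h₁ : IsProjSES ι₁ π₁) (h₂ : IsProjSES ι₂ π₂)
    (h : StablyEquiv R C₁ C₂) : StablyEquiv R A₁ A₂ := by
  obtain ⟨U, V, hU, hV, ⟨e⟩⟩ := h
  obtain ⟨e'⟩ := schanuel ((h₁.inl_comp_prodMap_id U).postcomp_equiv e) (h₂.inl_comp_prodMap_id V)
  have := h₁.projective
  have := h₂.projective
  exact ⟨.of R (P₂ × V), .of R (P₁ × U), inferInstanceAs (Module.Projective R (P₂ × V)),
    inferInstanceAs (Module.Projective R (P₁ × U)), ⟨e'⟩⟩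

theorem IsHomExactSES.exists_of_stablyEquiv {N P : Type u} [AddCommGroup N] [Module R N]
    [AddCommGroup P] [Module R P] {ι : N →ₗ[R] P} {π : P →ₗ[R] C} (h : IsHomExactSES ι π)
    (hAN : StablyEquiv R A N) :
    ∃ (E : ModuleCat.{u} R) (ι' : A →ₗ[R] E) (π' : E →ₗ[R] C), IsHomExactSES ι' π' := by
  obtain ⟨U, V, hU, hV, ⟨e⟩⟩ := hAN
  obtain ⟨E, ι', π', h'⟩ := ((h.prodMap_id V).precomp_equiv e).absorb
  exact ⟨.of R E, ι', π', h'⟩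

end Stable

theorem Nat.gcd_of_dvd_of_sub {p : ℕ → Prop} (dvd : ∀ a b, a ∣ b → p a → p b)
    (sub : ∀ k g, 0 < g → p (k + g) → p k → p g) {m n : ℕ} (hm : p m) (hn : p n) :
    p (m.gcd n) := by
  induction m, n using Nat.gcd.induction with
  | H0 n => simpa using hn
  | H1 m n _ ih =>
    rw [Nat.gcd_rec]
    rcases (n % m).eq_zero_or_pos with h | h
    · rwa [h, Nat.gcd_zero_left]
    · refine ih (sub (m * (n / m)) _ h ?_ (dvd m _ (dvd_mul_right m _) hm)) hm
      rwa [Nat.div_add_mod]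

theorem Int.exists_cyclic_index {g : ℕ} (hg : 0 < g) :
    ∃ ρ : ℤ → ℤ, (∀ i, ρ (i + 1) = if ρ i = g then 1 else ρ i + 1) ∧ ∀ k, ρ (g * k + 1) = 1 := by
  have hg' : (0 : ℤ) < g := by exact_mod_cast hg
  refine ⟨fun i => (i - 1) % g + 1, fun i => ?_, fun k => by simp⟩
  have h₀ := Int.emod_nonneg (i - 1) hg'.ne'
  have h₁ := Int.emod_lt_of_pos (i - 1) hg'
  show (i + 1 - 1) % g + 1 = if (i - 1) % g + 1 = g then 1 else (i - 1) % g + 1 + 1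
  rw [show i + 1 - 1 = i - 1 + 1 by ring, ← Int.emod_add_emod]
  split_ifs with h
  · rw [h, Int.emod_self, zero_add]
  · rw [Int.emod_eq_of_lt (by omega) (by omega)]

section Chain

variable {M : Type u} [AddCommGroup M] [Module R M]

variable (R) in
/-- Splicing the sequences gives the complex of `IsNSGProjective`, in which `syz (i + 1)` is the
image of the differential `mid (i + 1) → mid i`; hence the `+ 1` in `equiv`. -/
structure SyzygyChain (n : ℕ) (M : Type u) [AddCommGroup M] [Module R M] where
  syz : ℤ → ModuleCat.{u} R
  mid : ℤ → ModuleCat.{u} R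
  ses : ∀ i, ∃ (ι : syz (i + 1) →ₗ[R] mid i) (π : mid i →ₗ[R] syz i), IsHomExactSES ι π
  equiv : ∀ k : ℤ, Nonempty (M ≃ₗ[R] syz (n * k + 1))

variable {n : ℕ}

theorem SyzygyChain.isNSGProjective (C : SyzygyChain R n M) : IsNSGProjective R n M := by
  choose ι π h using C.ses
  refine ⟨C.mid, fun i => ι i ∘ₗ π (i + 1), fun i => (h i).projective, ⟨fun i => ?_, fun k => ?_⟩,
    fun Q _ i => ?_⟩
  · exact exact_splice (h i).injective (h (i + 1)).exact (h (i + 1 + 1)).surjective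
  · obtain ⟨e⟩ := C.equiv k
    refine ⟨e ≪≫ₗ LinearEquiv.ofInjective _ (h _).injective ≪≫ₗ LinearEquiv.ofEq _ _ ?_⟩
    exact (LinearMap.range_comp_of_range_eq_top _
      (LinearMap.range_eq_top.mpr (h _).surjective)).symm
  · exact exact_precomp_splice (h i) (h (i + 1)).toIsProjSES (h (i + 1 + 1)).surjective Q

theorem isHomExactSES_range {P : ℤ → ModuleCat.{u} R} {d : ∀ i : ℤ, P (i + 1) →ₗ[R] P i}
    (hP : ∀ i, Module.Projective R (P i)) (hex : ∀ i : ℤ, Function.Exact (d (i + 1)) (d i))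
    (hhom : IsHomExact R P d) (j : ℤ) :
    IsHomExactSES (LinearMap.range (d (j + 1))).subtype (d j).rangeRestrict where
  projective := hP (j + 1)
  injective := Subtype.val_injective
  surjective := (d j).surjective_rangeRestrict
  exact y := by
    simpa [Subtype.ext_iff] using hex j y
  extend Q _ _ _ f := by
    have hdd : (d (j + 1)).rangeRestrict ∘ₗ d (j + 1 + 1) = 0 := by
      ext x
      simpa using (hex (j + 1)).apply_apply_eq_zero x
    have hG : f ∘ₗ (d (j + 1)).rangeRestrict ∘ₗ d (j + 1 + 1) = 0 := by
      rw [hdd, LinearMap.comp_zero]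
    obtain ⟨g, hg⟩ := (hhom (.of R Q) inferInstance (j + 1) (f ∘ₗ (d (j + 1)).rangeRestrict)).mp hG
    refine ⟨g, ?_⟩
    ext ⟨_, x, rfl⟩
    exact LinearMap.congr_fun hg x

theorem IsNSGProjective.nonempty_syzygyChain (h : IsNSGProjective R n M) :
    Nonempty (SyzygyChain R n M) := by
  obtain ⟨P, d, hP, ⟨hex, hiso⟩, hhom⟩ := h
  refine ⟨⟨fun j => .of R (LinearMap.range (d (j - 1))), P, fun i => ?_, fun k => ?_⟩⟩
  · obtain ⟨j, rfl⟩ : ∃ j, i = j + 1 := ⟨i - 1, by ring⟩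
    rw [add_sub_cancel_right, add_sub_cancel_right]
    exact ⟨_, _, isHomExactSES_range hP hex hhom j⟩
  · rw [add_sub_cancel_right]
    exact hiso k

theorem isNSGProjective_iff_nonempty_syzygyChain :
    IsNSGProjective R n M ↔ Nonempty (SyzygyChain R n M) :=
  ⟨IsNSGProjective.nonempty_syzygyChain, fun ⟨C⟩ => C.isNSGProjective⟩

def SyzygyChain.ofDvd {m : ℕ} (C : SyzygyChain R n M) (h : n ∣ m) : SyzygyChain R m M where
  __ := C
  equiv k := by
    obtain ⟨c, rfl⟩ := h
    rw [Nat.cast_mul, mul_assoc]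
    exact C.equiv (c * k)

theorem SyzygyChain.nonempty_equiv_syz (C : SyzygyChain R n M) (k : ℤ) {j : ℤ}
    (hj : n * k + 1 = j) : Nonempty (M ≃ₗ[R] C.syz j) :=
  hj ▸ C.equiv k

theorem SyzygyChain.stablyEquiv_syz_add {n' : ℕ} {M' : Type u} [AddCommGroup M'] [Module R M']
    (A : SyzygyChain R n M) (B : SyzygyChain R n' M') {a b : ℤ}
    (h : StablyEquiv R (A.syz a) (B.syz b)) (t : ℕ) :
    StablyEquiv R (A.syz (a + t)) (B.syz (b + t)) := by
  induction t with
  | zero => rwa [Nat.cast_zero, add_zero, add_zero]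
  | succ t ih =>
    obtain ⟨_, _, hA⟩ := A.ses (a + t)
    obtain ⟨_, _, hB⟩ := B.ses (b + t)
    rw [Nat.cast_succ, ← add_assoc, ← add_assoc]
    exact .of_isProjSES hA.toIsProjSES hB.toIsProjSES ih

theorem SyzygyChain.stablyEquiv_syz {K g : ℕ} (A : SyzygyChain R (K + g) M)
    (B : SyzygyChain R K M) : StablyEquiv R M (A.syz (g + 1)) := by
  obtain ⟨eA₀⟩ := A.nonempty_equiv_syz 0 (j := 1) (by simp)
  obtain ⟨eA₁⟩ := A.nonempty_equiv_syz 1 (j := 1 + K + g) (by push_cast; ring)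
  obtain ⟨eB₀⟩ := B.nonempty_equiv_syz 0 (j := 1) (by simp)
  obtain ⟨eB₁⟩ := B.nonempty_equiv_syz 1 (j := 1 + K) (by ring)
  have hK : StablyEquiv R (A.syz (1 + K)) (A.syz 1) :=
    (A.stablyEquiv_syz_add B (.of_equiv (eA₀.symm ≪≫ₗ eB₀)) K).trans
      (.of_equiv (eB₁.symm ≪≫ₗ eA₀))
  rw [add_comm (g : ℤ)]
  exact (StablyEquiv.of_equiv eA₁).trans (A.stablyEquiv_syz_add A hK g)

/-- The new chain runs cyclically through the positions `1, …, g` of `A`, with the closing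
sequence in place of the one of `A` at `g`. -/
theorem SyzygyChain.nonempty_of_closing {g : ℕ} (hg : 0 < g) (A : SyzygyChain R n M)
    (hE : ∃ (E : ModuleCat.{u} R) (ι : M →ₗ[R] E) (π : E →ₗ[R] A.syz g), IsHomExactSES ι π) :
    Nonempty (SyzygyChain R g M) := by
  obtain ⟨E, ι, π, hιπ⟩ := hE
  obtain ⟨e⟩ := A.nonempty_equiv_syz 0 (j := 1) (by simp)
  obtain ⟨ρ, hρ, hρg⟩ := Int.exists_cyclic_index hg
  refine ⟨⟨fun i => A.syz (ρ i), fun i => if ρ i = g then E else A.mid (ρ i), fun i => ?_,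
    fun k => ?_⟩⟩
  · rw [hρ i]
    by_cases hi : ρ i = g
    · rw [if_pos hi, if_pos hi, hi]
      exact ⟨_, _, hιπ.precomp_equiv e.symm⟩
    · rw [if_neg hi, if_neg hi]
      exact A.ses (ρ i)
  · rw [hρg]
    exact ⟨e⟩

theorem SyzygyChain.nonempty_of_add {K g : ℕ} (hg : 0 < g) (A : SyzygyChain R (K + g) M)
    (B : SyzygyChain R K M) : Nonempty (SyzygyChain R g M) := by
  obtain ⟨_, _, h⟩ := A.ses g
  exact A.nonempty_of_closing hg (h.exists_of_stablyEquiv (A.stablyEquiv_syz B))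

end Chain

theorem nSGProjective_gcd_general (R : Type u) [Ring R] (m n : ℕ)
    (M : Type u) [AddCommGroup M] [Module R M] :
    (IsNSGProjective R m M ∧ IsNSGProjective R n M) ↔
      IsNSGProjective R (Nat.gcd m n) M := by
  simp only [isNSGProjective_iff_nonempty_syzygyChain]
  constructor
  · rintro ⟨hm, hn⟩
    refine Nat.gcd_of_dvd_of_sub (p := fun k => Nonempty (SyzygyChain R k M)) ?_ ?_ hm hn
    · rintro a b hab ⟨C⟩
      exact ⟨C.ofDvd hab⟩
    · rintro k g hg ⟨A⟩ ⟨B⟩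
      exact A.nonempty_of_add hg B
  · rintro ⟨C⟩
    exact ⟨⟨C.ofDvd (Nat.gcd_dvd_left m n)⟩, ⟨C.ofDvd (Nat.gcd_dvd_right m n)⟩⟩

/-- A module is both `m`- and `n`-strongly Gorenstein projective if and only if it is
`gcd m n`-strongly Gorenstein projective. -/
theorem nSGProjective_gcd (R : Type u) [Ring R] (m n : ℕ) (hm : 0 < m) (hn : 0 < n)
    (M : Type u) [AddCommGroup M] [Module R M] :
    (IsNSGProjective R m M ∧ IsNSGProjective R n M) ↔
      IsNSGProjective R (Nat.gcd m n) M :=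
  nSGProjective_gcd_general R m n M
end

section
/- Let M be an n-strongly Gorenstein projective module. Then M is projective if and only if Ext^i_R(M, M) = 0 for all 1 ≤ i ≤ n. -/
open CategoryTheory DirectSum

universe u

/-!
Splicing the periodic sequence yields a projective resolution `⋯ → P₂ → P₁ → M` in which `M`
reappears as the image of `P_{n+1} → P_n`. The induced surjection `P_{n+1} → M` is then an
`n`-cocycle of `Hom(P_•, M)`; if `Ext^n(M, M) = 0` it is a coboundary, i.e. it extends along
`P_{n+1} → P_n`, and the extension restricts to a retraction of `M ↪ P_n`. Thus `M` is a direct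
summand of a projective module. Conversely `Ext^{≥1}` out of a projective module vanishes.
-/

lemma Function.Exact.symm_comp_rangeRestrict {R A B C M : Type*} [Semiring R] [AddCommMonoid A]
    [AddCommMonoid B] [AddCommMonoid C] [AddCommMonoid M] [Module R A] [Module R B] [Module R C]
    [Module R M] {f : A →ₗ[R] B} {g : B →ₗ[R] C} (h : Function.Exact f g)
    (e : M ≃ₗ[R] LinearMap.range g) : Function.Exact f (e.symm.toLinearMap ∘ₗ g.rangeRestrict) := by
  rw [LinearMap.exact_iff, LinearEquiv.ker_comp, LinearMap.ker_rangeRestrict, h.linearMap_ker_eq]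

lemma Module.Projective.of_comp_eq_symm_comp_rangeRestrict {R A B M : Type*} [Semiring R]
    [AddCommMonoid A] [AddCommMonoid B] [AddCommMonoid M] [Module R A] [Module R B] [Module R M]
    [Module.Projective R B] {f : A →ₗ[R] B} (e : M ≃ₗ[R] LinearMap.range f) (h : B →ₗ[R] M)
    (hh : h ∘ₗ f = e.symm.toLinearMap ∘ₗ f.rangeRestrict) : Module.Projective R M := by
  refine .of_split ((LinearMap.range f).subtype ∘ₗ e.toLinearMap) h (LinearMap.ext fun x => ?_)
  obtain ⟨z, hz⟩ := (e x).2
  have hez : f.rangeRestrict z = e x := Subtype.ext hz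
  calc h (e x) = h (f z) := by rw [hz]
    _ = e.symm (e x) := by rw [← LinearMap.comp_apply, hh, LinearMap.comp_apply, hez]; rfl
    _ = x := e.symm_apply_apply x

section

variable {C : Type*} [Category C] [Abelian C]

theorem ChainComplex.quasiIso_toSingle₀Equiv_symm {K : ChainComplex C ℕ} {Z : C}
    (f : K.X 0 ⟶ Z) (w : K.d 1 0 ≫ f = 0) (hf : (ShortComplex.mk _ _ w).Exact) [Epi f]
    (hK : ∀ n, K.ExactAt (n + 1)) : QuasiIso ((K.toSingle₀Equiv Z).symm ⟨f, w⟩) where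
  quasiIsoAt
    | 0 => by
      rw [ChainComplex.quasiIsoAt₀_iff, ShortComplex.quasiIso_iff_of_zeros']
      · refine (ShortComplex.exact_and_epi_g_iff_of_iso ?_).2 ⟨hf, ‹_›⟩
        refine ShortComplex.isoMk (Iso.refl _) (Iso.refl _) (Iso.refl _) ?_ ?_
        · exact (Category.id_comp _).trans (Category.comp_id _).symm
        · have := ChainComplex.toSingle₀Equiv_symm_apply_f_zero f w
          exact (Category.id_comp f).trans (this.symm.trans (Category.comp_id _).symm)
      · exact K.shape 0 0 (by simp)
      all_goals exact HomologicalComplex.single_obj_d (c := ComplexShape.down ℕ) 0 Z _ _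
    | n + 1 => by
      rw [quasiIsoAt_iff_exactAt' (hL := ChainComplex.exactAt_succ_single_obj ..)]
      exact hK n

theorem CategoryTheory.ProjectiveResolution.exists_comp_eq_of_isZero_ext {A : Type*} [Ring A]
    [Linear A C] [EnoughProjectives C] {X Y : C} (P : ProjectiveResolution X) (m : ℕ)
    (hXY : Limits.IsZero (((Ext A C (m + 1)).obj (Opposite.op X)).obj Y))
    (f : P.complex.X (m + 1) ⟶ Y) (hf : P.complex.d (m + 2) (m + 1) ≫ f = 0) :
    ∃ g : P.complex.X m ⟶ Y, P.complex.d (m + 1) m ≫ g = f := by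
  have hK : (P.complex.linearYonedaObj A Y).ExactAt (m + 1) :=
    (HomologicalComplex.exactAt_iff_isZero_homology _ _).2 (hXY.of_iso (P.isoExt _ _).symm)
  rw [HomologicalComplex.exactAt_iff' _ m (m + 1) (m + 2) (by simp) (by simp),
    ShortComplex.moduleCat_exact_iff] at hK
  exact hK f hf

end

namespace ModuleCat

variable {R : Type u} [Ring R] (P : ℤ → ModuleCat.{u} R) (d : ∀ i : ℤ, P (i + 1) →ₗ[R] P i)

-- Degree `j` of this complex is `P (j + 1)`.
noncomputable def positivePart (hd : ∀ i, d i ∘ₗ d (i + 1) = 0) :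
    ChainComplex (ModuleCat.{u} R) ℕ :=
  ChainComplex.of (fun j => P (j + 1))
    (fun j => (ofHom (d (j + 1)) : P (j + 1 + 1) ⟶ P (j + 1)))
    fun j => by ext x; exact LinearMap.congr_fun (hd (j + 1)) (show P (j + 1 + 1 + 1) from x)

lemma positivePart_d (hd : ∀ i, d i ∘ₗ d (i + 1) = 0) (j : ℕ) :
    (positivePart P d hd).d (j + 1) j = (ofHom (d (j + 1)) : P (j + 1 + 1) ⟶ P (j + 1)) :=
  ChainComplex.of_d (fun j : ℕ => P (j + 1))
    (fun j : ℕ => (ofHom (d (j + 1)) : P (j + 1 + 1) ⟶ P (j + 1))) j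

lemma positivePart_exactAt (hex : ∀ i, Function.Exact (d (i + 1)) (d i)) (j : ℕ) :
    (positivePart P d fun i => (hex i).linearMap_comp_eq_zero).ExactAt (j + 1) := by
  rw [HomologicalComplex.exactAt_iff' _ (j + 2) (j + 1) j (by simp) (by simp),
    ShortComplex.moduleCat_exact_iff_range_eq_ker]
  simp only [HomologicalComplex.shortComplexFunctor'_obj_f,
    HomologicalComplex.shortComplexFunctor'_obj_g, positivePart_d]
  exact (hex _).linearMap_ker_eq.symm

variable {M : Type u} [AddCommGroup M] [Module R M]

noncomputable def projectiveResolutionOfExact (hproj : ∀ i, Module.Projective R (P i))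
    (hex : ∀ i, Function.Exact (d (i + 1)) (d i)) (e : M ≃ₗ[R] LinearMap.range (d 0)) :
    ProjectiveResolution (of R M) :=
  let K := positivePart P d fun i => (hex i).linearMap_comp_eq_zero
  let ε : K.X 0 ⟶ of R M := ofHom (e.symm.toLinearMap ∘ₗ (d 0).rangeRestrict)
  have hε := (hex 0).symm_comp_rangeRestrict e
  have w : K.d 1 0 ≫ ε = 0 := by
    rw [positivePart_d]; exact hom_ext hε.linearMap_comp_eq_zero
  have : Epi ε := (epi_iff_surjective _).2 (e.symm.surjective.comp (d 0).surjective_rangeRestrict)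
  { complex := K
    projective j := (IsProjective.iff_projective _).mp (hproj _)
    π := (ChainComplex.toSingle₀Equiv _ _).symm ⟨ε, w⟩
    quasiIso := ChainComplex.quasiIso_toSingle₀Equiv_symm ε w
      (by rw [ShortComplex.moduleCat_exact_iff_range_eq_ker]; exact hε.linearMap_ker_eq.symm)
      (positivePart_exactAt P d hex) }

lemma projectiveResolutionOfExact_complex_d (hproj : ∀ i, Module.Projective R (P i))
    (hex : ∀ i, Function.Exact (d (i + 1)) (d i)) (e : M ≃ₗ[R] LinearMap.range (d 0)) (j : ℕ) :
    (projectiveResolutionOfExact P d hproj hex e).complex.d (j + 1) j =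
      (ofHom (d (j + 1)) : P (j + 1 + 1) ⟶ P (j + 1)) :=
  positivePart_d P d (fun i => (hex i).linearMap_comp_eq_zero) j

theorem projective_of_syzygy_of_subsingleton_ext (hproj : ∀ i, Module.Projective R (P i))
    (hex : ∀ i, Function.Exact (d (i + 1)) (d i)) (e₀ : M ≃ₗ[R] LinearMap.range (d 0)) (j : ℕ)
    (e : M ≃ₗ[R] LinearMap.range (d (j + 1)))
    (hext : Subsingleton (((Ext ℤ (ModuleCat.{u} R) (j + 1)).obj (Opposite.op (of R M))).obj
      (of R M))) :
    Module.Projective R M := by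
  let res := projectiveResolutionOfExact P d hproj hex e₀
  have hd := projectiveResolutionOfExact_complex_d P d hproj hex e₀
  let c : P (j + 1 + 1) ⟶ of R M := ofHom (e.symm.toLinearMap ∘ₗ (d (j + 1)).rangeRestrict)
  have hc : res.complex.d (j + 2) (j + 1) ≫ c = 0 := by
    rw [hd]
    exact hom_ext ((hex (j + 1)).symm_comp_rangeRestrict e).linearMap_comp_eq_zero
  obtain ⟨g, hg⟩ := res.exists_comp_eq_of_isZero_ext j (isZero_iff_subsingleton.2 hext) c hc
  rw [hd] at hg
  have := hproj (j + 1)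
  exact .of_comp_eq_symm_comp_rangeRestrict e g.hom (congrArg Hom.hom hg)

end ModuleCat

/-- An `n`-strongly Gorenstein projective module `M` is projective if and only if
`Ext^i(M, M) = 0` for all `1 ≤ i ≤ n`. -/
theorem nSGProjective_projective_iff_ext_self_vanishes (R : Type u) [Ring R] (n : ℕ)
    (hn : 0 < n) (M : Type u) [AddCommGroup M] [Module R M]
    (hM : IsNSGProjective R n M) :
    Module.Projective R M ↔ ∀ i : ℕ, 1 ≤ i → i ≤ n →
      Subsingleton (((Ext ℤ (ModuleCat.{u} R) i).obj
        (Opposite.op (ModuleCat.of R M))).obj (ModuleCat.of R M)) := by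
  obtain ⟨P, d, hproj, ⟨hex, hsyz⟩, -⟩ := hM
  refine ⟨fun hMproj i hi _ => ?_, fun hext => ?_⟩
  · have := (IsProjective.iff_projective M).mp hMproj
    obtain ⟨j, rfl⟩ := Nat.exists_eq_add_one_of_ne_zero (Nat.one_le_iff_ne_zero.mp hi)
    exact ModuleCat.subsingleton_of_isZero (isZero_Ext_succ_of_projective _ _ j)
  · obtain ⟨j, rfl⟩ := Nat.exists_eq_add_one_of_ne_zero hn.ne'
    obtain ⟨e₀⟩ : Nonempty (M ≃ₗ[R] LinearMap.range (d 0)) := by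
      rw [← mul_zero ((j + 1 : ℕ) : ℤ)]; exact hsyz 0
    obtain ⟨e⟩ : Nonempty (M ≃ₗ[R] LinearMap.range (d (j + 1))) := by
      rw [show (j : ℤ) + 1 = ((j + 1 : ℕ) : ℤ) * 1 by push_cast; ring]; exact hsyz 1
    exact ModuleCat.projective_of_syzygy_of_subsingleton_ext P d hproj hex e₀ j e
      (hext (j + 1) le_add_self le_rfl)
end

section
/- Let M be an n-strongly Gorenstein projective module. If Ext^i_R(M, M) = 0 for every i ≥ 1, then M is projective. -/
open CategoryTheory DirectSum

universe u

/-!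
Cutting the periodic complex `⋯ → P₁ → P₀ → ⋯` below degree `1` gives a projective resolution
`⋯ → P₂ → P₁ → M` of `M ≅ im d₀`, whose `n`-th syzygy `im dₙ ⊆ Pₙ` is again `M`. Corestricting
`dₙ` to `M` gives an `n`-cocycle `Pₙ₊₁ → M` of `Hom(P_•, M)`; as `Ext^n(M, M) = 0` it is a
coboundary `h ∘ dₙ`, and then `h : Pₙ → M` retracts the inclusion `M ≅ im dₙ ↪ Pₙ`.
So `M` is a direct summand of a projective module.
-/

theorem Function.Exact.equiv_comp_rangeRestrict {R N₁ N₂ N₃ M : Type*} [Semiring R]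
    [AddCommMonoid N₁] [AddCommMonoid N₂] [AddCommMonoid N₃] [AddCommMonoid M]
    [Module R N₁] [Module R N₂] [Module R N₃] [Module R M] {f : N₁ →ₗ[R] N₂} {g : N₂ →ₗ[R] N₃}
    (h : Function.Exact f g) (e : LinearMap.range g ≃ₗ[R] M) :
    Function.Exact f (e.toLinearMap ∘ₗ g.rangeRestrict) := by
  rwa [LinearMap.exact_iff, LinearEquiv.ker_comp, LinearMap.ker_rangeRestrict,
    ← LinearMap.exact_iff]

lemma CategoryTheory.ProjectiveResolution.exists_d_comp_eq_of_subsingleton_ext {R C : Type*}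
    [Ring R] [Category C] [Abelian C] [Linear R C] [EnoughProjectives C] {X Y : C}
    (P : ProjectiveResolution X) (n : ℕ)
    (hext : Subsingleton (((Ext R C (n + 1)).obj (Opposite.op X)).obj Y))
    (φ : P.complex.X (n + 1) ⟶ Y) (hφ : P.complex.d (n + 2) (n + 1) ≫ φ = 0) :
    ∃ ψ : P.complex.X n ⟶ Y, P.complex.d (n + 1) n ≫ ψ = φ := by
  have hexact : (P.complex.linearYonedaObj R Y).ExactAt (n + 1) := by
    rw [HomologicalComplex.exactAt_iff_isZero_homology]
    exact (ModuleCat.isZero_of_subsingleton _).of_iso (P.isoExt (n + 1) Y).symm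
  rw [HomologicalComplex.exactAt_iff' _ n (n + 1) (n + 2) (by simp) (by simp),
    ShortComplex.moduleCat_exact_iff] at hexact
  exact hexact φ hφ

section ExactIntComplex

variable {R : Type u} [Ring R] {P : ℤ → ModuleCat.{u} R} {d : ∀ i : ℤ, P (i + 1) →ₗ[R] P i}

def truncatedComplex (hdd : ∀ i, d i ∘ₗ d (i + 1) = 0) : ChainComplex (ModuleCat.{u} R) ℕ :=
  ChainComplex.of (fun k => P (k + 1))
    (fun k => ModuleCat.ofHom (d (k + 1) : P (k + 1 + 1) →ₗ[R] P (k + 1)))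
    (fun k => ModuleCat.hom_ext (show d (k + 1) ∘ₗ d (k + 1 + 1) = 0 from hdd (k + 1)))

lemma truncatedComplex_d (hdd : ∀ i, d i ∘ₗ d (i + 1) = 0) (k : ℕ) :
    (truncatedComplex hdd).d (k + 1) k =
      ModuleCat.ofHom (d (k + 1) : P (k + 1 + 1) →ₗ[R] P (k + 1)) := by
  simp [truncatedComplex]

lemma truncatedComplex_exactAt_succ (hex : ∀ i, Function.Exact (d (i + 1)) (d i)) (k : ℕ) :
    (truncatedComplex fun i => (hex i).linearMap_comp_eq_zero).ExactAt (k + 1) := by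
  rw [HomologicalComplex.exactAt_iff' _ (k + 1 + 1) (k + 1) k (by simp) (by simp)]
  apply ModuleCat.shortComplex_exact
  simp only [HomologicalComplex.sc', HomologicalComplex.shortComplexFunctor'_obj_f,
    HomologicalComplex.shortComplexFunctor'_obj_g, truncatedComplex_d]
  exact hex (k + 1)

variable {M : Type u} [AddCommGroup M] [Module R M]

noncomputable def projectiveResolutionOfExact (hproj : ∀ i, Module.Projective R (P i))
    (hex : ∀ i, Function.Exact (d (i + 1)) (d i)) (e : M ≃ₗ[R] LinearMap.range (d 0)) :
    ProjectiveResolution (ModuleCat.of R M) :=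
  have hε : Function.Exact (d (0 + 1)) (e.symm.toLinearMap ∘ₗ (d 0).rangeRestrict) :=
    (hex 0).equiv_comp_rangeRestrict e.symm
  { complex := truncatedComplex fun i => (hex i).linearMap_comp_eq_zero
    projective k := (IsProjective.iff_projective _).mp (hproj _)
    π := (ChainComplex.toSingle₀Equiv _ _).symm
      ⟨ModuleCat.ofHom (e.symm.toLinearMap ∘ₗ (d 0).rangeRestrict : P ((0 : ℕ) + 1) →ₗ[R] M),
        by
          rw [truncatedComplex_d]
          exact ModuleCat.hom_ext hε.linearMap_comp_eq_zero⟩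
    quasiIso := ⟨fun k => by
      cases k with
      | zero =>
        rw [ChainComplex.quasiIsoAt₀_iff, ShortComplex.quasiIso_iff_of_zeros' _ rfl rfl rfl]
        constructor
        · apply ModuleCat.shortComplex_exact
          simp only [HomologicalComplex.shortComplexFunctor'_obj_f,
            HomologicalComplex.shortComplexFunctor'_map_τ₂, truncatedComplex_d]
          exact hε
        · rw [ModuleCat.epi_iff_surjective]
          exact e.symm.surjective.comp (d 0).surjective_rangeRestrict
      | succ k =>
        rw [quasiIsoAt_iff_exactAt' _ _ (ChainComplex.exactAt_succ_single_obj _ _)]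
        exact truncatedComplex_exactAt_succ hex k⟩ }

lemma projectiveResolutionOfExact_complex_d (hproj : ∀ i, Module.Projective R (P i))
    (hex : ∀ i, Function.Exact (d (i + 1)) (d i)) (e : M ≃ₗ[R] LinearMap.range (d 0)) (k : ℕ) :
    (projectiveResolutionOfExact hproj hex e).complex.d (k + 1) k =
      ModuleCat.ofHom (d (k + 1) : P (k + 1 + 1) →ₗ[R] P (k + 1)) :=
  truncatedComplex_d (fun i => (hex i).linearMap_comp_eq_zero) k

theorem exists_comp_subtype_eq_of_subsingleton_ext (hproj : ∀ i, Module.Projective R (P i))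
    (hex : ∀ i, Function.Exact (d (i + 1)) (d i)) (e : M ≃ₗ[R] LinearMap.range (d 0)) (m : ℕ)
    {N : Type u} [AddCommGroup N] [Module R N]
    (hext : Subsingleton (((Ext ℤ (ModuleCat.{u} R) (m + 1)).obj
      (Opposite.op (ModuleCat.of R M))).obj (ModuleCat.of R N)))
    (f : LinearMap.range (d (m + 1)) →ₗ[R] N) :
    ∃ g : P (m + 1) →ₗ[R] N, g ∘ₗ (LinearMap.range (d (m + 1))).subtype = f := by
  let res := projectiveResolutionOfExact hproj hex e
  have hcocycle : (f ∘ₗ (d (m + 1)).rangeRestrict) ∘ₗ d (m + 1 + 1) = 0 :=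
    LinearMap.ext fun x =>
      (congrArg f (Subtype.ext ((hex (m + 1)).apply_apply_eq_zero x))).trans (map_zero f)
  let φ : res.complex.X (m + 1) ⟶ ModuleCat.of R N :=
    ModuleCat.ofHom (f ∘ₗ (d (m + 1)).rangeRestrict : P (m + 1 + 1) →ₗ[R] N)
  obtain ⟨g, hg⟩ := res.exists_d_comp_eq_of_subsingleton_ext m hext φ (by
    rw [projectiveResolutionOfExact_complex_d]
    exact ModuleCat.hom_ext hcocycle)
  rw [projectiveResolutionOfExact_complex_d] at hg
  refine ⟨g.hom, LinearMap.ext fun ⟨_, x, rfl⟩ => ?_⟩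
  exact LinearMap.congr_fun (congrArg ModuleCat.Hom.hom hg) x

theorem projective_of_subsingleton_ext_of_equiv_range (hproj : ∀ i, Module.Projective R (P i))
    (hex : ∀ i, Function.Exact (d (i + 1)) (d i)) (e₀ : M ≃ₗ[R] LinearMap.range (d 0))
    {n : ℕ} (hn : 0 < n) (eₙ : M ≃ₗ[R] LinearMap.range (d n))
    (hext : Subsingleton (((Ext ℤ (ModuleCat.{u} R) n).obj
      (Opposite.op (ModuleCat.of R M))).obj (ModuleCat.of R M))) :
    Module.Projective R M := by
  obtain ⟨m, rfl⟩ : ∃ m, n = m + 1 := ⟨n - 1, by omega⟩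
  rw [Nat.cast_succ] at eₙ
  obtain ⟨g, hg⟩ := exists_comp_subtype_eq_of_subsingleton_ext hproj hex e₀ m hext eₙ.symm
  have := hproj (m + 1)
  refine Module.Projective.of_split ((LinearMap.range (d (m + 1))).subtype ∘ₗ eₙ.toLinearMap) g ?_
  rw [← LinearMap.comp_assoc, hg, LinearEquiv.symm_comp]

end ExactIntComplex

/-- An `n`-strongly Gorenstein projective module `M` with `Ext^i(M, M) = 0` for all
`i ≥ 1` is projective. -/
theorem nSGProjective_projective_of_ext_self_vanishes (R : Type u) [Ring R] (n : ℕ)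
    (hn : 0 < n) (M : Type u) [AddCommGroup M] [Module R M]
    (hM : IsNSGProjective R n M)
    (hext : ∀ i : ℕ, 1 ≤ i →
      Subsingleton (((Ext ℤ (ModuleCat.{u} R) i).obj
        (Opposite.op (ModuleCat.of R M))).obj (ModuleCat.of R M))) :
    Module.Projective R M := by
  obtain ⟨P, d, hproj, ⟨hex, hiso⟩, -⟩ := hM
  obtain ⟨e₀⟩ := hiso 0
  obtain ⟨eₙ⟩ := hiso 1
  rw [mul_zero] at e₀
  rw [mul_one] at eₙ
  exact projective_of_subsingleton_ext_of_equiv_range hproj hex e₀ hn eₙ (hext n hn)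
end

section
/- The class of n-strongly Gorenstein projective modules is closed under arbitrary direct sums. -/
/-!
Take the termwise direct sum of the periodic complexes of the summands. Exactness and the
syzygies pass to direct sums summandwise, and `Hom(⨁ j, P j, Q) ≃ Π j, Hom(P j, Q)` carries the
`Hom(-, Q)`-exactness of the summands over to the sum.
-/

open CategoryTheory DirectSum

universe u

namespace DirectSum

variable {R : Type*} [Ring R] {ι : Type*} {A B C : ι → Type*}
  [∀ j, AddCommGroup (A j)] [∀ j, Module R (A j)]
  [∀ j, AddCommGroup (B j)] [∀ j, Module R (B j)]
  [∀ j, AddCommGroup (C j)] [∀ j, Module R (C j)]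

theorem exact_lmap {f : ∀ j, A j →ₗ[R] B j} {g : ∀ j, B j →ₗ[R] C j}
    (h : ∀ j, Function.Exact (f j) (g j)) : Function.Exact (lmap f) (lmap g) := by
  rw [LinearMap.exact_iff, ker_lmap, range_lmap]
  simp_rw [fun j => (h j).linearMap_ker_eq]

noncomputable def rangeLmapEquiv (f : ∀ j, A j →ₗ[R] B j) :
    (⨁ j, LinearMap.range (f j)) ≃ₗ[R] LinearMap.range (lmap f) :=
  (LinearEquiv.ofInjective _ ((lmap_injective _).2 fun j => Submodule.injective_subtype _)).trans
    (LinearEquiv.ofEq _ _ (by simp_rw [range_lmap, Submodule.range_subtype]))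

theorem exact_precomp_lmap [DecidableEq ι] {Q : Type*} [AddCommGroup Q] [Module R Q]
    {f : ∀ j, A j →ₗ[R] B j} {g : ∀ j, B j →ₗ[R] C j}
    (h : ∀ j, Function.Exact (fun φ : C j →ₗ[R] Q => φ ∘ₗ g j)
      (fun φ : B j →ₗ[R] Q => φ ∘ₗ f j)) :
    Function.Exact (fun φ : (⨁ j, C j) →ₗ[R] Q => φ ∘ₗ lmap g)
      (fun φ : (⨁ j, B j) →ₗ[R] Q => φ ∘ₗ lmap f) := by
  intro φ
  have comp_lof : ∀ j, (φ ∘ₗ lmap f) ∘ₗ lof R ι A j = (φ ∘ₗ lof R ι B j) ∘ₗ f j := fun j =>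
    LinearMap.ext fun x => by simp
  constructor
  · intro (hφ : φ ∘ₗ lmap f = 0)
    choose ψ hψ using fun j => (h j (φ ∘ₗ lof R ι B j)).1 <| by
      change _ ∘ₗ _ = 0
      rw [← comp_lof, hφ, LinearMap.zero_comp]
    refine ⟨toModule R ι Q ψ, linearMap_ext R fun j => LinearMap.ext fun x => ?_⟩
    simpa using LinearMap.congr_fun (hψ j) x
  · rintro ⟨ψ, rfl⟩
    refine linearMap_ext R fun j => ?_
    rw [comp_lof]
    exact (h j _).2 ⟨ψ ∘ₗ lof R ι C j, LinearMap.ext fun x => by simp⟩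

end DirectSum

section DirectSumComplex

variable {R : Type u} [Ring R] {ι : Type u} (P : ι → ℤ → ModuleCat.{u} R)
  (d : ∀ j i, P j (i + 1) →ₗ[R] P j i)

abbrev directSumComplex (i : ℤ) : ModuleCat.{u} R := ModuleCat.of R (⨁ j, P j i)

noncomputable def directSumDifferential (i : ℤ) :
    directSumComplex P (i + 1) →ₗ[R] directSumComplex P i :=
  lmap fun j => d j i

variable {P d}

theorem projective_directSumComplex (h : ∀ j i, Module.Projective R (P j i)) (i : ℤ) :
    Module.Projective R (directSumComplex P i) := by
  have := fun j => h j i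
  classical
  exact inferInstanceAs (Module.Projective R (⨁ j, P j i))

theorem isPeriodicExact_directSum (n : ℕ) {M : ι → Type u} [∀ j, AddCommGroup (M j)]
    [∀ j, Module R (M j)] (h : ∀ j, IsPeriodicExact R n (M j) (P j) (d j)) :
    IsPeriodicExact R n (⨁ j, M j) (directSumComplex P) (directSumDifferential P d) :=
  ⟨fun i => exact_lmap fun j => (h j).1 i, fun k =>
    ⟨(DFinsupp.mapRange.linearEquiv fun j => ((h j).2 k).some).trans (rangeLmapEquiv _)⟩⟩

theorem isHomExact_directSum (h : ∀ j, IsHomExact R (P j) (d j)) :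
    IsHomExact R (directSumComplex P) (directSumDifferential P d) := by
  classical
  exact fun Q hQ i => exact_precomp_lmap fun j => h j Q hQ i

end DirectSumComplex

theorem nSGProjective_directSum_general (R : Type u) [Ring R] (n : ℕ)
    (ι : Type u) (M : ι → Type u) [∀ j, AddCommGroup (M j)] [∀ j, Module R (M j)]
    (hM : ∀ j, IsNSGProjective R n (M j)) :
    IsNSGProjective R n (⨁ j, M j) := by
  choose P d hproj hper hhom using hM
  exact ⟨directSumComplex P, directSumDifferential P d, projective_directSumComplex hproj,
    isPeriodicExact_directSum n hper, isHomExact_directSum hhom⟩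

/-- The class of `n`-strongly Gorenstein projective modules is closed under arbitrary
direct sums. -/
theorem nSGProjective_directSum (R : Type u) [Ring R] (n : ℕ) (hn : 0 < n)
    (ι : Type u) (M : ι → Type u) [∀ j, AddCommGroup (M j)] [∀ j, Module R (M j)]
    (hM : ∀ j, IsNSGProjective R n (M j)) :
    IsNSGProjective R n (⨁ j, M j) :=
  nSGProjective_directSum_general R n ι M hM
end

section
/- Write M = M̲ ⊕ P, where P is projective and M̲ has no nonzero projective direct summands. Then M is n-strongly Gorenstein projective if and only if M̲ is n-strongly Gorenstein projective. -/
open CategoryTheory DirectSum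

universe u

/-!
If `M ≅ N ⊕ P` is the image of `d i` in a totally acyclic complex `G` of projectives, then
`Hom(-, P)`-exactness extends the projection `M → P` to `G i`, so `P` splits off `G i`, and
projectivity of `P` lifts `P ⊆ M` to `G (i + 1)`: the contractible complex `0 → P = P → 0`
is a direct summand of `G` in degrees `i + 1, i`. Splitting it off at all degrees `≡ 0 mod n`
at once leaves a totally acyclic complex of projectives in which `N` takes the place of `M`.
Conversely, adding the contractible periodic complex `P × P` to a complex for `N` gives one
for `M`.
-/

variable {R : Type u} [Ring R]

open LinearMap

structure IsTotallyAcyclic (G : ℤ → ModuleCat.{u} R) (d : ∀ i : ℤ, G (i + 1) →ₗ[R] G i) :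
    Prop where
  projective : ∀ i, Module.Projective R (G i)
  exact : ∀ i, Function.Exact (d (i + 1)) (d i)
  homExact : IsHomExact R G d

namespace IsTotallyAcyclic

variable {G H : ℤ → ModuleCat.{u} R} {d : ∀ i : ℤ, G (i + 1) →ₗ[R] G i}
  {δ : ∀ i : ℤ, H (i + 1) →ₗ[R] H i}

lemma apply_apply (hG : IsTotallyAcyclic G d) (i : ℤ) (x : G (i + 1 + 1)) : d i (d (i + 1) x) = 0 :=
  (hG.exact i).apply_apply_eq_zero x

lemma shift (hG : IsTotallyAcyclic G d) :
    IsTotallyAcyclic (fun i => G (i + 1)) (fun i => d (i + 1)) :=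
  ⟨fun _ => hG.projective _, fun _ => hG.exact _, fun Q hQ i => hG.homExact Q hQ (i + 1)⟩

lemma exists_comp_subtype_eq (hG : IsTotallyAcyclic G d) {Q : Type u} [AddCommGroup Q] [Module R Q]
    [Module.Projective R Q] (i : ℤ) (f : range (d i) →ₗ[R] Q) :
    ∃ g : G i →ₗ[R] Q, g.comp (range (d i)).subtype = f := by
  have hf : (f.comp (d i).rangeRestrict).comp (d (i + 1)) = 0 := by
    ext x
    simp [show (d i).rangeRestrict (d (i + 1) x) = 0 from Subtype.ext (hG.apply_apply i x)]
  obtain ⟨g, hg⟩ := (hG.homExact (ModuleCat.of R Q) ‹_› i _).1 hf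
  refine ⟨g, ?_⟩
  ext ⟨_, y, rfl⟩
  exact congr($hg y)

lemma prod (hG : IsTotallyAcyclic G d) (hH : IsTotallyAcyclic H δ) :
    IsTotallyAcyclic (fun i => ModuleCat.of R (G i × H i)) (fun i => (d i).prodMap (δ i)) where
  projective i := by
    have := hG.projective i
    have := hH.projective i
    exact inferInstanceAs (Module.Projective R (G i × H i))
  exact i x := by
    rw [prodMap_apply, Prod.ext_iff, Prod.fst_zero, Prod.snd_zero, hG.exact i x.1,
      hH.exact i x.2]
    constructor
    · rintro ⟨⟨y, hy⟩, z, hz⟩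
      exact ⟨(y, z), Prod.ext hy hz⟩
    · rintro ⟨y, rfl⟩
      exact ⟨⟨y.1, rfl⟩, y.2, rfl⟩
  homExact Q hQ i h := by
    constructor
    · intro hh
      obtain ⟨g₁, hg₁⟩ := (hG.homExact Q hQ i (h ∘ₗ inl _ _ _)).1 <| by
        ext x
        simpa using congr($hh (x, 0))
      obtain ⟨g₂, hg₂⟩ := (hH.homExact Q hQ i (h ∘ₗ inr _ _ _)).1 <| by
        ext x
        simpa using congr($hh (0, x))
      refine ⟨g₁.coprod g₂, prod_ext ?_ ?_⟩
      · ext x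
        simpa using congr($hg₁ x)
      · ext x
        simpa using congr($hg₂ x)
    · rintro ⟨g, rfl⟩
      ext x <;> simp [hG.apply_apply, hH.apply_apply, Prod.mk_zero_zero]

end IsTotallyAcyclic

lemma isTotallyAcyclic_inl_comp_snd (P : Type u) [AddCommGroup P] [Module R P]
    [Module.Projective R P] :
    IsTotallyAcyclic (fun _ => ModuleCat.of R (P × P)) (fun _ => inl R P P ∘ₗ snd R P P) where
  projective _ := inferInstanceAs (Module.Projective R (P × P))
  exact _ x := by
    constructor
    · intro hx
      exact ⟨(0, x.1), Prod.ext rfl (congr($hx.1)).symm⟩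
    · rintro ⟨y, rfl⟩
      rfl
  homExact Q hQ i h := by
    constructor
    · intro hh
      refine ⟨h ∘ₗ inr _ _ _ ∘ₗ fst _ _ _, ?_⟩
      ext x
      · simpa [Prod.mk_zero_zero] using (congr($hh (0, x))).symm
      · simp
    · rintro ⟨g, rfl⟩
      ext x <;> simp [Prod.mk_zero_zero]

variable (R) in
/-- `IsNSGProjective` with the syzygies in the degrees `≡ s [ZMOD n]`. The offset is needed
because complexes can only be reindexed along `i ↦ i + 1` without transport. -/
def IsNSGProjectiveAt (n : ℕ) (s : ℤ) (M : Type u) [AddCommGroup M] [Module R M] : Prop :=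
  ∃ (G : ℤ → ModuleCat.{u} R) (d : ∀ i : ℤ, G (i + 1) →ₗ[R] G i),
    IsTotallyAcyclic G d ∧ ∀ k : ℤ, Nonempty (M ≃ₗ[R] range (d (n * k + s)))

lemma nonempty_linearEquiv_range_of_eq {X : Type u} [AddCommGroup X] [Module R X]
    {G : ℤ → ModuleCat.{u} R} (d : ∀ i : ℤ, G (i + 1) →ₗ[R] G i) {i j : ℤ} (h : i = j)
    (hX : Nonempty (X ≃ₗ[R] range (d i))) : Nonempty (X ≃ₗ[R] range (d j)) := by
  subst h
  exact hX

lemma nonempty_linearEquiv_range_prodMap {X Y A B C D : Type u} [AddCommGroup X] [Module R X]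
    [AddCommGroup Y] [Module R Y] [AddCommGroup A] [Module R A] [AddCommGroup B] [Module R B]
    [AddCommGroup C] [Module R C] [AddCommGroup D] [Module R D] {f : A →ₗ[R] C} {g : B →ₗ[R] D}
    (φ : X ≃ₗ[R] range f) (ψ : Y ≃ₗ[R] range g) : Nonempty ((X × Y) ≃ₗ[R] range (f.prodMap g)) := by
  let F := ((range f).subtype ∘ₗ φ.toLinearMap).prodMap ((range g).subtype ∘ₗ ψ.toLinearMap)
  have hF : Function.Injective F := by
    rw [coe_prodMap]
    exact (Subtype.val_injective.comp φ.injective).prodMap (Subtype.val_injective.comp ψ.injective)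
  have hFrange : range F = range (f.prodMap g) := by
    simp only [F, range_prodMap, range_comp, LinearEquiv.range, Submodule.map_top,
      Submodule.range_subtype]
  exact ⟨(LinearEquiv.ofInjective F hF).trans (LinearEquiv.ofEq _ _ hFrange)⟩

section NSGProjectiveAt

variable {n : ℕ} {M N P : Type u} [AddCommGroup M] [Module R M] [AddCommGroup N] [Module R N]
  [AddCommGroup P] [Module R P]

lemma isNSGProjectiveAt_zero_iff : IsNSGProjectiveAt R n 0 M ↔ IsNSGProjective R n M := by
  constructor
  · rintro ⟨G, d, ⟨hproj, hexact, hhom⟩, hM⟩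
    exact ⟨G, d, hproj, ⟨hexact, fun k => nonempty_linearEquiv_range_of_eq d (add_zero _) (hM k)⟩,
      hhom⟩
  · rintro ⟨G, d, hproj, ⟨hexact, hM⟩, hhom⟩
    exact ⟨G, d, ⟨hproj, hexact, hhom⟩,
      fun k => nonempty_linearEquiv_range_of_eq d (add_zero _).symm (hM k)⟩

namespace IsNSGProjectiveAt

variable {s : ℤ}

lemma add_period (h : IsNSGProjectiveAt R n s M) : IsNSGProjectiveAt R n (s + n) M := by
  obtain ⟨G, d, hG, hM⟩ := h
  refine ⟨G, d, hG, fun k => ?_⟩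
  exact nonempty_linearEquiv_range_of_eq d (by ring) (hM (k + 1))

lemma shift (h : IsNSGProjectiveAt R n (s + 1) M) : IsNSGProjectiveAt R n s M := by
  obtain ⟨G, d, hG, hM⟩ := h
  refine ⟨fun i => G (i + 1), fun i => d (i + 1), hG.shift, fun k => ?_⟩
  exact nonempty_linearEquiv_range_of_eq d (add_assoc _ _ _).symm (hM k)

lemma of_add_nat (m : ℕ) (h : IsNSGProjectiveAt R n (s + m) M) : IsNSGProjectiveAt R n s M := by
  induction m with
  | zero => simpa using h
  | succ m ih => exact ih (shift (by rwa [Nat.cast_succ, ← add_assoc] at h))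

lemma prod_projective (h : IsNSGProjectiveAt R n s N) [Module.Projective R P] :
    IsNSGProjectiveAt R n s (N × P) := by
  obtain ⟨G, d, hG, hN⟩ := h
  refine ⟨_, _, hG.prod (isTotallyAcyclic_inl_comp_snd P), fun k => ?_⟩
  obtain ⟨φ⟩ := hN k
  have hP : range (inl R P P) = range (inl R P P ∘ₗ snd R P P) :=
    (range_comp_of_range_eq_top _ Submodule.range_snd).symm
  exact nonempty_linearEquiv_range_prodMap φ
    ((LinearEquiv.ofInjective _ (inl_injective (R := R))).trans (LinearEquiv.ofEq _ _ hP))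

end IsNSGProjectiveAt

end NSGProjectiveAt

section KerRetraction

variable {E : Type u} [AddCommGroup E] [Module R E] {c : Module.End R E}

def kerRetraction (hc : IsIdempotentElem c) : E →ₗ[R] ker c :=
  (LinearMap.id - c).codRestrict (ker c) fun x => by
    simp [mem_ker, ← Module.End.mul_apply, hc.eq]

@[simp]
lemma coe_kerRetraction_apply (hc : IsIdempotentElem c) (x : E) :
    (kerRetraction hc x : E) = x - c x :=
  rfl

@[simp]
lemma kerRetraction_apply_coe (hc : IsIdempotentElem c) (x : ker c) :
    kerRetraction hc (x : E) = x :=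
  Subtype.ext (by simp [mem_ker.1 x.2])

end KerRetraction

section KernelComplex

variable {G : ℤ → ModuleCat.{u} R} {d : ∀ i : ℤ, G (i + 1) →ₗ[R] G i}
  {c : ∀ i, Module.End R (G i)} (hcd : ∀ i x, d i (c (i + 1) x) = c i (d i x))

def kerD (i : ℤ) : ModuleCat.of R (ker (c (i + 1))) →ₗ[R] ModuleCat.of R (ker (c i)) :=
  (d i).restrict fun x hx => by simp_all [mem_ker, ← hcd]

variable (hc : ∀ i, IsIdempotentElem (c i))
include hcd hc

lemma kerD_kerRetraction (i : ℤ) (x : G (i + 1)) :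
    kerD hcd i (kerRetraction (hc (i + 1)) x) = kerRetraction (hc i) (d i x) := by
  ext
  simp [kerD, hcd]

lemma map_range_kerD (i : ℤ) :
    (range (kerD hcd i)).map (ker (c i)).subtype = range (d i) ⊓ ker (c i) := by
  ext y
  constructor
  · rintro ⟨_, ⟨x, rfl⟩, rfl⟩
    exact ⟨⟨x, rfl⟩, (kerD hcd i x).2⟩
  · rintro ⟨⟨x, rfl⟩, hx⟩
    refine ⟨_, ⟨kerRetraction (hc (i + 1)) x, rfl⟩, ?_⟩
    rw [kerD_kerRetraction]
    simpa using hx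

theorem IsTotallyAcyclic.restrictKer (hG : IsTotallyAcyclic G d) :
    IsTotallyAcyclic (fun i => ModuleCat.of R (ker (c i))) (kerD hcd) where
  projective i :=
    have := hG.projective i
    .of_split (ker (c i)).subtype (kerRetraction (hc i)) (by ext; simp)
  exact i x := by
    constructor
    · intro hx
      obtain ⟨y, hy⟩ := (hG.exact i x).1 congr($hx.1)
      refine ⟨kerRetraction (hc (i + 1 + 1)) y, ?_⟩
      rw [kerD_kerRetraction, hy, kerRetraction_apply_coe]
    · rintro ⟨y, rfl⟩
      ext
      exact hG.apply_apply i y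
  homExact Q hQ i h := by
    constructor
    · intro hh
      obtain ⟨g, hg⟩ := (hG.homExact Q hQ i (h ∘ₗ kerRetraction (hc (i + 1)))).1 <| by
        ext y
        have := congr($hh (kerRetraction (hc (i + 1 + 1)) y))
        dsimp only at this ⊢
        rw [LinearMap.comp_apply, kerD_kerRetraction] at this
        simpa using this
      refine ⟨g ∘ₗ (ker (c i)).subtype, ?_⟩
      ext x
      have := congr($hg x)
      simp only [LinearMap.comp_apply, kerRetraction_apply_coe] at this
      exact this
    · rintro ⟨g, rfl⟩
      ext x
      have : kerD hcd i (kerD hcd (i + 1) x) = 0 := Subtype.ext (hG.apply_apply i x)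
      simp [this]

end KernelComplex

namespace IsTotallyAcyclic

variable {G : ℤ → ModuleCat.{u} R} {d : ∀ i : ℤ, G (i + 1) →ₗ[R] G i} {t : ∀ i, Module.End R (G i)}

lemma apply_apply_eq_zero_of_range_le (hG : IsTotallyAcyclic G d)
    (htd : ∀ i, range (t i) ≤ range (d i)) (i : ℤ) (x : G (i + 1)) : d i (t (i + 1) x) = 0 := by
  obtain ⟨y, hy⟩ := htd (i + 1) ⟨x, rfl⟩
  rw [← hy, hG.apply_apply]

variable (hG : IsTotallyAcyclic G d) (ht : ∀ i, IsIdempotentElem (t i))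
  (htd : ∀ i, range (t i) ≤ range (d i))
include hG ht htd

lemma exists_homotopy : ∃ σ : ∀ i, G i →ₗ[R] G (i + 1), ∀ i x,
    d i (σ i x) = t i x ∧ σ i (t i x) = σ i x ∧ t (i + 1) (σ i x) = 0 := by
  have htt (i : ℤ) (x : G i) : t i (t i x) = t i x := congr($(ht i) x)
  have hlift (i : ℤ) : ∃ σ : G i →ₗ[R] G (i + 1), ∀ x, d i (σ x) = t i x := by
    have := hG.projective i
    obtain ⟨σ, hσ⟩ := Module.projective_lifting_property (d i).rangeRestrict
      ((t i).codRestrict _ fun x => htd i ⟨x, rfl⟩) (d i).surjective_rangeRestrict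
    exact ⟨σ, fun x => congr(($hσ x : G i))⟩
  choose σ hσ using hlift
  refine ⟨fun i => (1 - t (i + 1)) ∘ₗ σ i ∘ₗ t i, fun i x => ⟨?_, ?_, ?_⟩⟩ <;>
    simp [hG.apply_apply_eq_zero_of_range_le htd, hσ, htt]

theorem exists_range_equiv_inf_ker :
    ∃ (K : ℤ → ModuleCat.{u} R) (δ : ∀ i : ℤ, K (i + 1) →ₗ[R] K i), IsTotallyAcyclic K δ ∧
      ∀ i, Nonempty (range (δ i) ≃ₗ[R] ↥(range (d (i + 1)) ⊓ ker (t (i + 1)))) := by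
  obtain ⟨σ, hσ⟩ := hG.exists_homotopy ht htd
  have htt (i : ℤ) (x : G i) : t i (t i x) = t i x := congr($(ht i) x)
  have hdt := hG.apply_apply_eq_zero_of_range_le htd
  -- the projection onto the contractible summand spanned by `t (i + 1)` and `σ i`
  let c (i : ℤ) : Module.End R (G (i + 1)) := t (i + 1) + σ i ∘ₗ d i
  have hc (i : ℤ) : IsIdempotentElem (c i) := by
    ext x
    simp [c, htt, hσ, hdt]
  have hcd (i : ℤ) (x : G (i + 1 + 1)) : d (i + 1) (c (i + 1) x) = c i (d (i + 1) x) := by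
    simp [c, hdt, hσ, hG.apply_apply]
  have hrange (i : ℤ) : range (d (i + 1)) ⊓ ker (c i) = range (d (i + 1)) ⊓ ker (t (i + 1)) := by
    ext x
    simp only [Submodule.mem_inf, mem_range, mem_ker]
    constructor <;> rintro ⟨⟨y, rfl⟩, h⟩ <;> exact ⟨⟨y, rfl⟩, by simpa [c, hG.apply_apply] using h⟩
  refine ⟨_, _, hG.shift.restrictKer hcd hc, fun i => ⟨?_⟩⟩
  exact (Submodule.equivMapOfInjective _ (ker (c i)).injective_subtype _).trans
    (LinearEquiv.ofEq _ _ ((map_range_kerD hcd hc i).trans (hrange i)))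

end IsTotallyAcyclic

lemma IsTotallyAcyclic.exists_isIdempotentElem_of_equiv_prod {G : ℤ → ModuleCat.{u} R}
    {d : ∀ i : ℤ, G (i + 1) →ₗ[R] G i} (hG : IsTotallyAcyclic G d) {N P : Type u}
    [AddCommGroup N] [Module R N] [AddCommGroup P] [Module R P] [Module.Projective R P] (i : ℤ)
    (ψ : (N × P) ≃ₗ[R] range (d i)) :
    ∃ t : Module.End R (G i), IsIdempotentElem t ∧ range t ≤ range (d i) ∧
      Nonempty (N ≃ₗ[R] ↥(range (d i) ⊓ ker t)) := by
  obtain ⟨ρ, hρ⟩ := hG.exists_comp_subtype_eq i (snd R N P ∘ₗ ψ.symm.toLinearMap)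
  have hρψ (z : N × P) : ρ (ψ z) = z.2 := by simpa using congr($hρ (ψ z))
  let ι := (range (d i)).subtype ∘ₗ ψ.toLinearMap ∘ₗ inr R N P
  have hρι (p : P) : ρ (ι p) = p := hρψ (0, p)
  let ν := (range (d i)).subtype ∘ₗ ψ.toLinearMap ∘ₗ inl R N P
  have hν : Function.Injective ν :=
    Subtype.val_injective.comp (ψ.injective.comp (inl_injective (R := R)))
  have hνrange : range ν = range (d i) ⊓ ker (ι ∘ₗ ρ) := by
    ext x
    constructor
    · rintro ⟨a, rfl⟩
      exact ⟨(ψ (a, 0)).2, by simp [ν, ι, hρψ]⟩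
    · rintro ⟨hx, hker⟩
      have hρx : ρ x = (ψ.symm ⟨x, hx⟩).2 := by
        simpa using hρψ (ψ.symm ⟨x, hx⟩)
      have h0 : (ψ.symm ⟨x, hx⟩).2 = 0 := by
        rw [← hρx, ← hρι (ρ x)]
        simpa using congr(ρ $(mem_ker.1 hker))
      refine ⟨(ψ.symm ⟨x, hx⟩).1, ?_⟩
      have hsplit : ((ψ.symm ⟨x, hx⟩).1, (0 : P)) = ψ.symm ⟨x, hx⟩ := Prod.ext rfl h0.symm
      simp [ν, hsplit]
  refine ⟨ι ∘ₗ ρ, ?_, ?_, ⟨(LinearEquiv.ofInjective ν hν).trans (LinearEquiv.ofEq _ _ hνrange)⟩⟩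
  · ext x
    simp [hρι]
  · rintro _ ⟨x, rfl⟩
    exact (ψ (0, ρ x)).2

section Reduction

variable {n : ℕ} {M N P : Type u} [AddCommGroup M] [Module R M] [AddCommGroup N] [Module R N]
  [AddCommGroup P] [Module R P] [Module.Projective R P]

theorem IsNSGProjectiveAt.left_of_equiv_prod {s : ℤ} (e : M ≃ₗ[R] N × P)
    (h : IsNSGProjectiveAt R n (s + 1) M) : IsNSGProjectiveAt R n s N := by
  obtain ⟨G, d, hG, hM⟩ := h
  have hsplit (j : ℤ) : ∃ t : Module.End R (G j), IsIdempotentElem t ∧ range t ≤ range (d j) ∧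
      ∀ k : ℤ, j = n * k + s + 1 → Nonempty (N ≃ₗ[R] ↥(range (d j) ⊓ ker t)) := by
    by_cases hj : ∃ k : ℤ, j = n * k + s + 1
    · obtain ⟨k, rfl⟩ := hj
      obtain ⟨φ⟩ := nonempty_linearEquiv_range_of_eq d (add_assoc _ _ _).symm (hM k)
      obtain ⟨t, ht, htd, hN⟩ := hG.exists_isIdempotentElem_of_equiv_prod _ (e.symm.trans φ)
      exact ⟨t, ht, htd, fun _ _ => hN⟩
    · exact ⟨0, .zero, by simp, fun k hk => absurd ⟨k, hk⟩ hj⟩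
  choose t ht htd hN using hsplit
  obtain ⟨K, δ, hK, hKt⟩ := hG.exists_range_equiv_inf_ker ht htd
  refine ⟨K, δ, hK, fun k => ?_⟩
  obtain ⟨ν⟩ := hN _ k rfl
  obtain ⟨κ⟩ := hKt (n * k + s)
  exact ⟨ν.trans κ.symm⟩

theorem IsNSGProjective.left_of_equiv_prod (hn : 0 < n) (e : M ≃ₗ[R] N × P)
    (h : IsNSGProjective R n M) : IsNSGProjective R n N := by
  have hM : IsNSGProjectiveAt R n ((n - 1 : ℤ) + 1) M := by
    simpa using (isNSGProjectiveAt_zero_iff.2 h).add_period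
  have hN : IsNSGProjectiveAt R n (0 + (n - 1 : ℕ)) N := by
    simpa [Nat.cast_sub hn] using hM.left_of_equiv_prod e
  exact isNSGProjectiveAt_zero_iff.1 (hN.of_add_nat _)

theorem IsNSGProjective.of_equiv_prod (e : M ≃ₗ[R] N × P) (h : IsNSGProjective R n N) :
    IsNSGProjective R n M := by
  obtain ⟨G, d, hG, hN⟩ := (isNSGProjectiveAt_zero_iff.2 h).prod_projective (P := P)
  exact isNSGProjectiveAt_zero_iff.1 ⟨G, d, hG, fun k => (hN k).map e.trans⟩

end Reduction

theorem nSGProjective_iff_reduced_part_general (R : Type u) [Ring R] (n : ℕ) (hn : 0 < n)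
    (M N P : Type u) [AddCommGroup M] [Module R M] [AddCommGroup N] [Module R N]
    [AddCommGroup P] [Module R P]
    (e : M ≃ₗ[R] N × P) (hP : Module.Projective R P) :
    IsNSGProjective R n M ↔ IsNSGProjective R n N :=
  ⟨fun h => h.left_of_equiv_prod hn e, fun h => h.of_equiv_prod e⟩

/-- If `M = M̲ ⊕ P` with `P` projective and `M̲` having no nonzero projective direct
summands, then `M` is `n`-strongly Gorenstein projective iff so is `M̲`. -/
theorem nSGProjective_iff_reduced_part (R : Type u) [Ring R] (n : ℕ) (hn : 0 < n)
    (M N P : Type u) [AddCommGroup M] [Module R M] [AddCommGroup N] [Module R N]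
    [AddCommGroup P] [Module R P]
    (e : M ≃ₗ[R] N × P) (hP : Module.Projective R P)
    (hN : ∀ Q : Submodule R N, (∃ Q' : Submodule R N, IsCompl Q Q') →
      Module.Projective R Q → Q = ⊥) :
    IsNSGProjective R n M ↔ IsNSGProjective R n N :=
  nSGProjective_iff_reduced_part_general R n hn M N P e hP
end

section
/- If M and N are projectively equivalent modules (i.e., M ⊕ P ≅ N ⊕ Q for some projective modules P, Q), then M is n-strongly Gorenstein projective if and only if N is n-strongly Gorenstein projective. -/
open CategoryTheory DirectSum

universe u

/-!
Adding the contractible complex `⋯ → Q × Q → Q × Q → ⋯`, with differential `(x, y) ↦ (y, 0)`,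
to a complex witnessing that `M` is `n`-SG-projective shows that so is `M × Q`. Conversely, let
`P` witness this for `N × Q`. At each degree `nk`, Hom-exactness against `Q` splits the summand
`Q` of the syzygy off `P_{nk}`, and projectivity of `Q` lifts it to `P_{nk+1}`. This yields maps
`c : P_j → P_{j+1}` with `c d c = c`, and `(1 - d c)(1 - c d)` is an idempotent chain endomorphism
of `P`. Its image is again a totally acyclic complex of projectives, now with syzygies `N`.
-/

open LinearMap

theorem Function.Exact.prodMap {M₁ M₂ M₃ N₁ N₂ N₃ : Type*} [Zero M₃] [Zero N₃]
    {f : M₁ → M₂} {g : M₂ → M₃} {f' : N₁ → N₂} {g' : N₂ → N₃}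
    (h : Function.Exact f g) (h' : Function.Exact f' g') :
    Function.Exact (Prod.map f f') (Prod.map g g') := by
  rintro ⟨y, y'⟩
  simp only [Prod.map_apply, Prod.mk_eq_zero, h y, h' y', Set.range_prodMap, Set.mem_prod]

section

variable {R : Type u} [Ring R]

theorem nonempty_linearEquiv_of_range_eq {M P : Type u} [AddCommGroup M] [Module R M]
    [AddCommGroup P] [Module R P] {g : M →ₗ[R] P} (hg : Function.Injective g)
    {p : Submodule R P} (h : range g = p) : Nonempty (M ≃ₗ[R] p) :=
  ⟨(LinearEquiv.ofInjective g hg).trans (LinearEquiv.ofEq _ _ h)⟩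

theorem IsNSGProjective.of_linearEquiv {n : ℕ} {M M' : Type u} [AddCommGroup M] [Module R M]
    [AddCommGroup M'] [Module R M'] (e : M ≃ₗ[R] M') (hM : IsNSGProjective R n M) :
    IsNSGProjective R n M' := by
  obtain ⟨P, d, hP, ⟨hex, hsyz⟩, hhe⟩ := hM
  exact ⟨P, d, hP, ⟨hex, fun k => ⟨e.symm.trans (hsyz k).some⟩⟩, hhe⟩

section HomExact

variable {P : ℤ → ModuleCat.{u} R} {d : ∀ i : ℤ, P (i + 1) →ₗ[R] P i}

theorem IsHomExact.exists_comp_eq (h : IsHomExact R P d) {Q : ModuleCat.{u} R}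
    (hQ : Module.Projective R Q) {i : ℤ} {g : P (i + 1) →ₗ[R] Q} (hg : g ∘ₗ d (i + 1) = 0) :
    ∃ f : P i →ₗ[R] Q, f ∘ₗ d i = g :=
  (h Q hQ i g).mp hg

theorem isHomExact_of_exists_comp_eq (hdd : ∀ i, d i ∘ₗ d (i + 1) = 0)
    (h : ∀ (Q : ModuleCat.{u} R), Module.Projective R Q → ∀ (i : ℤ) (g : P (i + 1) →ₗ[R] Q),
      g ∘ₗ d (i + 1) = 0 → ∃ f : P i →ₗ[R] Q, f ∘ₗ d i = g) :
    IsHomExact R P d := by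
  refine fun Q hQ i g => ⟨h Q hQ i g, ?_⟩
  rintro ⟨f, rfl⟩
  change (f ∘ₗ d i) ∘ₗ d (i + 1) = 0
  rw [LinearMap.comp_assoc, hdd, LinearMap.comp_zero]

theorem IsHomExact.prodMap {P' : ℤ → ModuleCat.{u} R} {d' : ∀ i : ℤ, P' (i + 1) →ₗ[R] P' i}
    (hdd : ∀ i, d i ∘ₗ d (i + 1) = 0) (hdd' : ∀ i, d' i ∘ₗ d' (i + 1) = 0)
    (h : IsHomExact R P d) (h' : IsHomExact R P' d') :
    IsHomExact R (fun j => ModuleCat.of R (P j × P' j)) (fun i => (d i).prodMap (d' i)) := by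
  refine isHomExact_of_exists_comp_eq (fun i => ?_) fun Q hQ i g hg => ?_
  · rw [prodMap_comp, hdd, hdd', prodMap_zero]
  obtain ⟨f, hf⟩ := h.exists_comp_eq hQ (g := g ∘ₗ inl R _ _) <| by
    ext x; simpa using congr($hg (x, 0))
  obtain ⟨f', hf'⟩ := h'.exists_comp_eq hQ (g := g ∘ₗ inr R _ _) <| by
    ext x; simpa using congr($hg (0, x))
  refine ⟨f.coprod f', LinearMap.ext fun x => ?_⟩
  have hx : g x = g (x.1, 0) + g (0, x.2) := by rw [← map_add, Prod.mk_add_mk, add_zero, zero_add]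
  simpa [hx] using congr($hf x.1 + $hf' x.2)

end HomExact

theorem IsNSGProjective.prod {n : ℕ} {M M' : Type u} [AddCommGroup M] [Module R M]
    [AddCommGroup M'] [Module R M'] (hM : IsNSGProjective R n M)
    (hM' : IsNSGProjective R n M') : IsNSGProjective R n (M × M') := by
  obtain ⟨P, d, hP, ⟨hex, hsyz⟩, hhe⟩ := hM
  obtain ⟨P', d', hP', ⟨hex', hsyz'⟩, hhe'⟩ := hM'
  refine ⟨fun j => ModuleCat.of R (P j × P' j), fun i => (d i).prodMap (d' i), fun j => ?_,
    ⟨fun i => (hex i).prodMap (hex' i), fun k => ?_⟩,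
    hhe.prodMap (fun i => (hex i).linearMap_comp_eq_zero)
      (fun i => (hex' i).linearMap_comp_eq_zero) hhe'⟩
  · have := hP j
    have := hP' j
    exact inferInstanceAs (Module.Projective R (P j × P' j))
  · obtain ⟨φ⟩ := hsyz k
    obtain ⟨φ'⟩ := hsyz' k
    refine nonempty_linearEquiv_of_range_eq
      (g := (Submodule.subtype _ ∘ₗ φ.toLinearMap).prodMap (Submodule.subtype _ ∘ₗ φ'.toLinearMap))
      (((Submodule.injective_subtype _).comp φ.injective).prodMap
        ((Submodule.injective_subtype _).comp φ'.injective)) ?_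
    rw [range_prodMap, range_prodMap, LinearEquiv.range_comp, LinearEquiv.range_comp,
      Submodule.range_subtype, Submodule.range_subtype]

theorem isNSGProjective_of_projective (n : ℕ) (Q : Type u) [AddCommGroup Q] [Module R Q]
    [Module.Projective R Q] : IsNSGProjective R n Q := by
  refine ⟨fun _ => ModuleCat.of R (Q × Q), fun _ => inl R Q Q ∘ₗ snd R Q Q,
    fun _ => inferInstanceAs (Module.Projective R (Q × Q)), ⟨fun _ => ?_, fun _ => ?_⟩,
    isHomExact_of_exists_comp_eq (fun _ => by ext <;> simp) fun Q' _ _ g hg => ?_⟩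
  · exact (inl_injective.comp_exact_iff_exact).mpr
      ((snd_surjective.comp_exact_iff_exact).mpr Function.Exact.inl_snd)
  · refine nonempty_linearEquiv_of_range_eq inl_injective ?_
    rw [range_comp_of_range_eq_top _ Submodule.range_snd]
  · refine ⟨g ∘ₗ inr R Q Q ∘ₗ fst R Q Q, LinearMap.ext fun x => ?_⟩
    have hx : g x = g (x.1, 0) + g (0, x.2) := by rw [← map_add, Prod.mk_add_mk, add_zero, zero_add]
    simpa [hx] using congr($hg (0, x.1))

section Retract

variable {P : ℤ → ModuleCat.{u} R} {d : ∀ i : ℤ, P (i + 1) →ₗ[R] P i}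
  {e : ∀ j, Module.End R (P j)} (he : ∀ j, IsIdempotentElem (e j))
  (hde : ∀ i, d i ∘ₗ e (i + 1) = e i ∘ₗ d i)
include hde

theorem apply_mem_range_of_comp_eq (i : ℤ) : ∀ x ∈ range (e (i + 1)), d i x ∈ range (e i) := by
  rintro _ ⟨x, rfl⟩
  exact ⟨d i x, congr($(hde i) x).symm⟩

theorem map_subtype_range_restrict (i : ℤ) :
    (range ((d i).restrict (apply_mem_range_of_comp_eq hde i))).map (range (e i)).subtype =
      (range (d i)).map (e i) := by
  rw [← range_comp, subtype_comp_restrict, range_domRestrict, ← range_comp, hde, range_comp]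

include he in
theorem exact_restrict_range {i : ℤ} (hex : Function.Exact (d (i + 1)) (d i)) :
    Function.Exact ((d (i + 1)).restrict (apply_mem_range_of_comp_eq hde (i + 1)))
      ((d i).restrict (apply_mem_range_of_comp_eq hde i)) := by
  rintro ⟨y, hy⟩
  constructor
  · intro hy0
    obtain ⟨z, rfl⟩ := (hex y).mp congr(Subtype.val $hy0)
    refine ⟨⟨e _ z, z, rfl⟩, Subtype.ext ?_⟩
    change (d (i + 1) ∘ₗ e (i + 1 + 1)) z = _
    rw [hde, LinearMap.comp_apply, (he _).mem_range_iff.mp hy]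
  · rintro ⟨⟨x, _⟩, hxy⟩
    rw [← hxy]
    exact Subtype.ext (hex.apply_apply_eq_zero x)

include he in
theorem IsHomExact.restrict_range (hdd : ∀ i, d i ∘ₗ d (i + 1) = 0) (hhe : IsHomExact R P d) :
    IsHomExact R (fun j => ModuleCat.of R (range (e j)))
      (fun i => (d i).restrict (apply_mem_range_of_comp_eq hde i)) := by
  refine isHomExact_of_exists_comp_eq (fun i => ?_) fun Q hQ i g hg => ?_
  · ext ⟨x, -⟩
    exact congr($(hdd i) x)
  -- `e` corestricted to its range is a chain map onto the subcomplex, so `g` extends through it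
  have hgπ : (g ∘ₗ (e (i + 1)).rangeRestrict) ∘ₗ d (i + 1) = 0 := by
    ext x
    have hπ : (e (i + 1)).rangeRestrict (d (i + 1) x) =
        (d (i + 1)).restrict (apply_mem_range_of_comp_eq hde (i + 1)) ⟨e _ x, x, rfl⟩ :=
      Subtype.ext congr($(hde (i + 1)) x).symm
    simpa [hπ] using congr($hg ⟨e _ x, x, rfl⟩)
  obtain ⟨f, hf⟩ := hhe.exists_comp_eq hQ hgπ
  refine ⟨f ∘ₗ (range (e i)).subtype, LinearMap.ext fun ⟨w, hw⟩ => ?_⟩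
  have hπw : (e (i + 1)).rangeRestrict w = ⟨w, hw⟩ := Subtype.ext ((he _).mem_range_iff.mp hw)
  simpa [hπw] using congr($hf w)

include he in
theorem isNSGProjective_of_retract {n : ℕ} {N : Type u} [AddCommGroup N] [Module R N]
    (hP : ∀ j, Module.Projective R (P j)) (hex : ∀ i, Function.Exact (d (i + 1)) (d i))
    (hhe : IsHomExact R P d)
    (hN : ∀ k : ℤ, Nonempty (N ≃ₗ[R] (range (d (n * k))).map (e (n * k)))) :
    IsNSGProjective R n N := by
  refine ⟨fun j => ModuleCat.of R (range (e j)),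
    fun i => (d i).restrict (apply_mem_range_of_comp_eq hde i), fun j => ?_,
    ⟨fun i => exact_restrict_range he hde (hex i), fun k => ?_⟩,
    hhe.restrict_range he hde fun i => (hex i).linearMap_comp_eq_zero⟩
  · have := hP j
    exact Module.Projective.of_split (range (e j)).subtype (e j).rangeRestrict
      (LinearMap.ext fun ⟨w, hw⟩ => Subtype.ext ((he j).mem_range_iff.mp hw))
  · obtain ⟨φ⟩ := hN k
    exact ⟨φ.trans ((Submodule.equivMapOfInjective _ (Submodule.injective_subtype _) _).trans
      (LinearEquiv.ofEq _ _ (map_subtype_range_restrict hde _))).symm⟩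

end Retract

theorem IsIdempotentElem.one_sub_mul_one_sub {A : Type*} [Ring A] {a b : A}
    (ha : IsIdempotentElem a) (hb : IsIdempotentElem b) (hba : b * a = 0) :
    IsIdempotentElem ((1 - a) * (1 - b)) := by
  have hab : (1 - b) * (1 - a) = (1 - b) - a := by
    simp only [mul_sub, sub_mul, one_mul, mul_one, hba]; abel
  have ha' : (1 - a) * a = 0 := by rw [sub_mul, one_mul, ha.eq, sub_self]
  calc (1 - a) * (1 - b) * ((1 - a) * (1 - b))
      = (1 - a) * ((1 - b) * (1 - a)) * (1 - b) := by simp only [mul_assoc]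
    _ = (1 - a) * (1 - b) * (1 - b) - (1 - a) * a * (1 - b) := by rw [hab]; noncomm_ring
    _ = (1 - a) * (1 - b) := by rw [mul_assoc, hb.one_sub.eq, ha', zero_mul, sub_zero]

section SplitOff

variable {P : ℤ → ModuleCat.{u} R} {d : ∀ i : ℤ, P (i + 1) →ₗ[R] P i}
  (hdd : ∀ i, d i ∘ₗ d (i + 1) = 0) {c : ∀ i, P i →ₗ[R] P (i + 1)}
  {b : ∀ j, Module.End R (P j)} (hb : ∀ i, b (i + 1) = c i ∘ₗ d i)
include hdd hb

theorem comp_eq_zero_of_shift_eq_comp (j : ℤ) : b j ∘ₗ d j = 0 := by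
  obtain ⟨i, rfl⟩ : ∃ i, i + 1 = j := ⟨j - 1, sub_add_cancel j 1⟩
  rw [hb, comp_assoc, hdd, comp_zero]

theorem isIdempotentElem_one_sub_mul_one_sub (hc : ∀ i, c i ∘ₗ d i ∘ₗ c i = c i) (j : ℤ) :
    IsIdempotentElem ((1 - d j ∘ₗ c j) * (1 - b j)) := by
  obtain ⟨i, rfl⟩ : ∃ i, i + 1 = j := ⟨j - 1, sub_add_cancel j 1⟩
  refine IsIdempotentElem.one_sub_mul_one_sub ?_ ?_ ?_
  · change (d _ ∘ₗ c _) ∘ₗ (d _ ∘ₗ c _) = _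
    rw [comp_assoc, hc]
  · change b _ ∘ₗ b _ = _
    rw [hb, ← comp_assoc, comp_assoc (c i) (d i) (c i), hc]
  · change b _ ∘ₗ (d _ ∘ₗ c _) = 0
    rw [← comp_assoc, comp_eq_zero_of_shift_eq_comp hdd hb, zero_comp]

theorem comp_one_sub_mul_one_sub (i : ℤ) :
    d i ∘ₗ ((1 - d (i + 1) ∘ₗ c (i + 1)) * (1 - b (i + 1))) =
      ((1 - d i ∘ₗ c i) * (1 - b i)) ∘ₗ d i := by
  ext x
  have hbd : b i (d i x) = 0 := congr($(comp_eq_zero_of_shift_eq_comp hdd hb i) x)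
  have hddx : ∀ y, d i (d (i + 1) y) = 0 := fun y => congr($(hdd i) y)
  simp [Module.End.mul_apply, hb, hbd, hddx]

theorem map_one_sub_mul_one_sub_range (j : ℤ) :
    (range (d j)).map ((1 - d j ∘ₗ c j) * (1 - b j)) = (range (d j)).map (1 - d j ∘ₗ c j) := by
  rw [← range_comp, ← range_comp]
  congr 1
  ext x
  have hbd : b j (d j x) = 0 := congr($(comp_eq_zero_of_shift_eq_comp hdd hb j) x)
  simp [Module.End.mul_apply, hbd]

end SplitOff

theorem exists_comp_comp_eq_self_of_range_equiv_prod {X Y Z N Q : Type u}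
    [AddCommGroup X] [Module R X] [AddCommGroup Y] [Module R Y] [AddCommGroup Z] [Module R Z]
    [AddCommGroup N] [Module R N] [AddCommGroup Q] [Module R Q] [Module.Projective R Q]
    {d₁ : X →ₗ[R] Y} {d : Y →ₗ[R] Z} (hdd : d ∘ₗ d₁ = 0)
    (hext : ∀ g : Y →ₗ[R] Q, g ∘ₗ d₁ = 0 → ∃ f : Z →ₗ[R] Q, f ∘ₗ d = g)
    (ψ : (N × Q) ≃ₗ[R] range d) :
    ∃ c : Z →ₗ[R] Y, c ∘ₗ d ∘ₗ c = c ∧ Nonempty (N ≃ₗ[R] (range d).map (1 - d ∘ₗ c)) := by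
  set ι : N × Q →ₗ[R] Z := (range d).subtype ∘ₗ ψ.toLinearMap
  have hι : range ι = range d := by rw [LinearEquiv.range_comp, Submodule.range_subtype]
  obtain ⟨ρ, hρ⟩ := hext (snd R N Q ∘ₗ ψ.symm.toLinearMap ∘ₗ d.rangeRestrict) <| by
    ext x
    simp [show d.rangeRestrict (d₁ x) = 0 from Subtype.ext congr($hdd x)]
  have hρι : ∀ z, ρ (ι z) = z.2 := by
    intro z
    obtain ⟨y, hy⟩ := (ψ z).2
    have hyz : d.rangeRestrict y = ψ z := Subtype.ext hy
    simpa [ι, ← hy, hyz] using congr($hρ y)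
  obtain ⟨σ, hσ⟩ := Module.projective_lifting_property d.rangeRestrict
    (ψ.toLinearMap ∘ₗ inr R N Q) d.surjective_rangeRestrict
  have hσ' : ∀ q, d (σ q) = ι (0, q) := fun q => congr(Subtype.val ($hσ q))
  refine ⟨σ ∘ₗ ρ, LinearMap.ext fun x => ?_, ?_⟩
  · simp [hσ', hρι]
  -- on the syzygy, `1 - dσρ` is the projection `ψ (m, q) ↦ ψ (m, 0)`
  have hproj : (1 - d ∘ₗ σ ∘ₗ ρ) ∘ₗ ι = (ι ∘ₗ inl R N Q) ∘ₗ fst R N Q := by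
    refine LinearMap.ext fun z => ?_
    have hz : z - (0, z.2) = (z.1, 0) := Prod.ext (sub_zero _) (sub_self _)
    simp [hσ', hρι, ← map_sub, hz]
  refine nonempty_linearEquiv_of_range_eq (g := ι ∘ₗ inl R N Q)
    ((Submodule.injective_subtype _).comp (ψ.injective.comp inl_injective)) ?_
  rw [← hι, ← range_comp, hproj, range_comp_of_range_eq_top _ Submodule.range_fst]

theorem IsNSGProjective.of_prod_projective {n : ℕ} {N Q : Type u} [AddCommGroup N] [Module R N]
    [AddCommGroup Q] [Module R Q] [Module.Projective R Q] (h : IsNSGProjective R n (N × Q)) :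
    IsNSGProjective R n N := by
  obtain ⟨P, d, hP, ⟨hex, hsyz⟩, hhe⟩ := h
  have hdd : ∀ i, d i ∘ₗ d (i + 1) = 0 := fun i => (hex i).linearMap_comp_eq_zero
  have hsplit : ∀ j, ∃ c : P j →ₗ[R] P (j + 1), c ∘ₗ d j ∘ₗ c = c ∧
      ((n : ℤ) ∣ j → Nonempty (N ≃ₗ[R] (range (d j)).map (1 - d j ∘ₗ c))) := by
    intro j
    by_cases hj : (n : ℤ) ∣ j
    · obtain ⟨k, rfl⟩ := hj
      obtain ⟨c, hc, hN⟩ := exists_comp_comp_eq_self_of_range_equiv_prod (hdd _)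
        (fun g hg => hhe.exists_comp_eq (Q := ModuleCat.of R Q) inferInstance hg)
        (hsyz k).some
      exact ⟨c, hc, fun _ => hN⟩
    · exact ⟨0, by simp, fun hdvd => absurd hdvd hj⟩
  choose c hc hN using hsplit
  -- `b j = c (j - 1) ∘ d (j - 1)`, which cannot be written directly: `P (j - 1 + 1)` is not `P j`
  obtain ⟨b, hb⟩ : ∃ b : ∀ j, Module.End R (P j), ∀ i, b (i + 1) = c i ∘ₗ d i :=
    ⟨Equiv.piCongrLeft _ (Equiv.addRight 1) fun i => c i ∘ₗ d i,
      Equiv.piCongrLeft_apply_apply _ (Equiv.addRight 1) _⟩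
  refine isNSGProjective_of_retract (isIdempotentElem_one_sub_mul_one_sub hdd hb hc)
    (comp_one_sub_mul_one_sub hdd hb) hP hex hhe fun k => ?_
  rw [map_one_sub_mul_one_sub_range hdd hb]
  exact hN _ ⟨k, rfl⟩

end

theorem nSGProjective_iff_of_projectively_equivalent_general (R : Type u) [Ring R] (n : ℕ)
    (M N : Type u) [AddCommGroup M] [Module R M] [AddCommGroup N]
    [Module R N]
    (h : ∃ P Q : ModuleCat.{u} R, Module.Projective R P ∧ Module.Projective R Q ∧
      Nonempty ((M × P) ≃ₗ[R] (N × Q))) :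
    IsNSGProjective R n M ↔ IsNSGProjective R n N := by
  obtain ⟨P, Q, hP, hQ, ⟨e⟩⟩ := h
  constructor
  · intro hM
    exact ((hM.prod (isNSGProjective_of_projective n P)).of_linearEquiv e).of_prod_projective
  · intro hN
    exact ((hN.prod (isNSGProjective_of_projective n Q)).of_linearEquiv e.symm).of_prod_projective

/-- If `M` and `N` are projectively equivalent, then `M` is `n`-strongly Gorenstein
projective iff so is `N`. -/
theorem nSGProjective_iff_of_projectively_equivalent (R : Type u) [Ring R] (n : ℕ)
    (hn : 0 < n) (M N : Type u) [AddCommGroup M] [Module R M] [AddCommGroup N]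
    [Module R N]
    (h : ∃ P Q : ModuleCat.{u} R, Module.Projective R P ∧ Module.Projective R Q ∧
      Nonempty ((M × P) ≃ₗ[R] (N × Q))) :
    IsNSGProjective R n M ↔ IsNSGProjective R n N :=
  nSGProjective_iff_of_projectively_equivalent_general R n M N h
end

section
/- The class of n-strongly Gorenstein flat modules is closed under arbitrary direct sums. -/
open CategoryTheory DirectSum

universe u

/-! Take the degreewise direct sum of the given complexes. Direct sums of flat modules are flat;
direct sums of exact sequences are exact and the range of a direct sum of maps is the direct sum of
the ranges, so the sum is again a periodic unrolling with syzygy `⨁ j, M j`; and `I ⊗_R -`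
commutes with direct sums, so tensor-exactness passes to the sum as well. -/

namespace DirectSum

variable {R ι : Type*} [Semiring R] {M N P : ι → Type*}
  [∀ i, AddCommMonoid (M i)] [∀ i, Module R (M i)]
  [∀ i, AddCommMonoid (N i)] [∀ i, Module R (N i)]
  [∀ i, AddCommMonoid (P i)] [∀ i, Module R (P i)]

theorem exact_lmap_s14 {f : ∀ i, M i →ₗ[R] N i} {g : ∀ i, N i →ₗ[R] P i}
    (h : ∀ i, Function.Exact (f i) (g i)) : Function.Exact (lmap f) (lmap g) :=
  LinearMap.exact_iff.mpr <| by simp only [ker_lmap, range_lmap, fun i => (h i).linearMap_ker_eq]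

noncomputable def lmapRangeEquiv (f : ∀ i, M i →ₗ[R] N i) :
    (⨁ i, LinearMap.range (f i)) ≃ₗ[R] LinearMap.range (lmap f) :=
  (LinearEquiv.ofInjective (lmap fun i => (LinearMap.range (f i)).subtype)
      ((lmap_injective _).mpr fun i => Subtype.val_injective)).trans
    (LinearEquiv.ofEq _ _ (by simp only [range_lmap, Submodule.range_subtype]))

end DirectSum

namespace TensorProduct

open DirectSum

variable {R ι : Type*} [CommSemiring R] [DecidableEq ι] {M N P : ι → Type*}
  [∀ i, AddCommMonoid (M i)] [∀ i, Module R (M i)]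
  [∀ i, AddCommMonoid (N i)] [∀ i, Module R (N i)]
  [∀ i, AddCommMonoid (P i)] [∀ i, Module R (P i)]
  (Q : Type*) [AddCommMonoid Q] [Module R Q]

lemma directSumRight_comp_lTensor_lmap (f : ∀ i, M i →ₗ[R] N i) :
    (directSumRight R R Q N).toLinearMap ∘ₗ (lmap f).lTensor Q =
      (lmap fun i => (f i).lTensor Q) ∘ₗ directSumRight R R Q M := by
  ext; simp

theorem exact_lTensor_lmap {f : ∀ i, M i →ₗ[R] N i} {g : ∀ i, N i →ₗ[R] P i}
    (h : ∀ i, Function.Exact ((f i).lTensor Q) ((g i).lTensor Q)) :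
    Function.Exact ((lmap f).lTensor Q) ((lmap g).lTensor Q) :=
  (Function.Exact.iff_of_ladder_linearEquiv (directSumRight_comp_lTensor_lmap Q f).symm
    (directSumRight_comp_lTensor_lmap Q g).symm).mp (exact_lmap_s14 h)

end TensorProduct

section DirectSumComplex

open DirectSum

variable {R : Type u} {ι : Type u}

theorem IsPeriodicExact.directSum [Ring R] {n : ℕ} {M : ι → Type u}
    [∀ j, AddCommGroup (M j)] [∀ j, Module R (M j)] {P : ι → ℤ → ModuleCat.{u} R}
    {d : ∀ j i, P j (i + 1) →ₗ[R] P j i}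
    (h : ∀ j, IsPeriodicExact R n (M j) (P j) (d j)) :
    IsPeriodicExact R n (⨁ j, M j) (fun i => ModuleCat.of R (⨁ j, P j i))
      (fun i => lmap fun j => d j i) :=
  ⟨fun i => exact_lmap_s14 fun j => (h j).1 i, fun k =>
    ⟨(DFinsupp.mapRange.linearEquiv fun j => ((h j).2 k).some).trans (lmapRangeEquiv _)⟩⟩

theorem IsTensorExact.directSum [CommRing R] {P : ι → ℤ → ModuleCat.{u} R}
    {d : ∀ j i, P j (i + 1) →ₗ[R] P j i}
    (h : ∀ j, IsTensorExact R (P j) (d j)) :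
    IsTensorExact R (fun i => ModuleCat.of R (⨁ j, P j i)) (fun i => lmap fun j => d j i) := by
  classical
  exact fun I hI i => TensorProduct.exact_lTensor_lmap I fun j => h j I hI i

end DirectSumComplex

theorem nSGFlat_directSum_general (R : Type u) [CommRing R] (n : ℕ)
    (ι : Type u) (M : ι → Type u) [∀ j, AddCommGroup (M j)] [∀ j, Module R (M j)]
    (hM : ∀ j, IsNSGFlat R n (M j)) :
    IsNSGFlat R n (⨁ j, M j) := by
  choose P d hflat hperiodic htensor using hM
  exact ⟨_, _, fun i => Module.Flat.directSum_iff.mpr fun j => hflat j i,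
    IsPeriodicExact.directSum hperiodic, IsTensorExact.directSum htensor⟩

/-- The class of `n`-strongly Gorenstein flat modules is closed under arbitrary direct
sums. -/
theorem nSGFlat_directSum (R : Type u) [CommRing R] (n : ℕ) (hn : 0 < n)
    (ι : Type u) (M : ι → Type u) [∀ j, AddCommGroup (M j)] [∀ j, Module R (M j)]
    (hM : ∀ j, IsNSGFlat R n (M j)) :
    IsNSGFlat R n (⨁ j, M j) :=
  nSGFlat_directSum_general R n ι M hM
end
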